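/- arXiv:2310.08575 — 6 statements merged into one kernel-verified Lean document; each statement's English description precedes it below -/
import Mathlib

section
/- For a real number x with 0 ≤ x < 1 and any positive integer n, the quadruple sum ∑_{i,j,k,l=1}^{n} x^{i+j+k+l - 4·min(i,j,k,l)} is at most (24/((1-x)(1-x²)(1-x³)))·n. -/
/-!
Let `m` be the smallest of `i, j, k, l`, attained say at `i`. Then
`x ^ (i + j + k + l - 4 m) = x ^ (j - i) * x ^ (k - i) * x ^ (l - i)` with all three gaps
nonnegative, so the summand is bounded by the sum over the four possible positions of the
minimum of such products. Summing over the other three indices, each position contributes at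
most `n / (1 - x) ^ 3`, by the geometric series, and `4 / (1 - x) ^ 3` is at most
`24 / ((1 - x) (1 - x²) (1 - x³))` because `(1 + x) (1 + x + x²) ≤ 6` for `x ≤ 1`.
-/

open Finset

noncomputable def powGap (x : ℝ) (a b : ℕ) : ℝ := if a ≤ b then x ^ (b - a) else 0

lemma powGap_nonneg {x : ℝ} (hx : 0 ≤ x) (a b : ℕ) : 0 ≤ powGap x a b := by
  unfold powGap
  split <;> positivity

lemma powGap_mul_powGap_mul_powGap {x : ℝ} {a b c d : ℕ} (hb : a ≤ b) (hc : a ≤ c)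
    (hd : a ≤ d) :
    powGap x a b * powGap x a c * powGap x a d = x ^ (b - a + (c - a) + (d - a)) := by
  simp only [powGap, if_pos hb, if_pos hc, if_pos hd, pow_add]

lemma sum_powGap_le {x : ℝ} (hx0 : 0 ≤ x) (hx1 : x < 1) (s : Finset ℕ) (a : ℕ) :
    ∑ b ∈ s, powGap x a b ≤ (1 - x)⁻¹ := by
  have hinj : Set.InjOn (· - a) ↑(s.filter (a ≤ ·)) := by
    intro b hb c hc hbc
    simp only [coe_filter, Set.mem_ofPred_eq] at hb hc
    simp only at hbc
    omega
  calc ∑ b ∈ s, powGap x a b = ∑ b ∈ s.filter (a ≤ ·), x ^ (b - a) := (sum_filter _ _).symm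
    _ = ∑ t ∈ (s.filter (a ≤ ·)).image (· - a), x ^ t := (sum_image hinj).symm
    _ ≤ ∑' t, x ^ t :=
      (summable_geometric_of_lt_one hx0 hx1).sum_le_tsum _ fun _ _ => by positivity
    _ = (1 - x)⁻¹ := tsum_geometric_of_lt_one hx0 hx1

lemma pow_sub_four_min_le {x : ℝ} (hx : 0 ≤ x) (i j k l : ℕ) :
    x ^ (i + j + k + l - 4 * min (min i j) (min k l))
      ≤ powGap x i j * powGap x i k * powGap x i l + powGap x j i * powGap x j k * powGap x j l
        + powGap x k i * powGap x k j * powGap x k l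
        + powGap x l i * powGap x l j * powGap x l k := by
  have h : ∀ a b c d : ℕ, 0 ≤ powGap x a b * powGap x a c * powGap x a d := fun a b c d =>
    mul_nonneg (mul_nonneg (powGap_nonneg hx a b) (powGap_nonneg hx a c)) (powGap_nonneg hx a d)
  rcases show min (min i j) (min k l) = i ∨ min (min i j) (min k l) = j ∨
      min (min i j) (min k l) = k ∨ min (min i j) (min k l) = l by omega with hm | hm | hm | hm
  · rw [powGap_mul_powGap_mul_powGap (x := x) (a := i) (b := j) (c := k) (d := l)
      (by omega) (by omega) (by omega), show i + j + k + l - 4 * min (min i j) (min k l)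
        = j - i + (k - i) + (l - i) by omega]
    linarith [h j i k l, h k i j l, h l i j k]
  · rw [powGap_mul_powGap_mul_powGap (x := x) (a := j) (b := i) (c := k) (d := l)
      (by omega) (by omega) (by omega), show i + j + k + l - 4 * min (min i j) (min k l)
        = i - j + (k - j) + (l - j) by omega]
    linarith [h i j k l, h k i j l, h l i j k]
  · rw [powGap_mul_powGap_mul_powGap (x := x) (a := k) (b := i) (c := j) (d := l)
      (by omega) (by omega) (by omega), show i + j + k + l - 4 * min (min i j) (min k l)
        = i - k + (j - k) + (l - k) by omega]
    linarith [h i j k l, h j i k l, h l i j k]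
  · rw [powGap_mul_powGap_mul_powGap (x := x) (a := l) (b := i) (c := j) (d := k)
      (by omega) (by omega) (by omega), show i + j + k + l - 4 * min (min i j) (min k l)
        = i - l + (j - l) + (k - l) by omega]
    linarith [h i j k l, h j i k l, h k i j l]

section Cube

variable {α : Type*} (s : Finset α) (P : α → α → ℝ)

lemma sum_pow_three_eq_sum_sum_sum_sum :
    ∑ a ∈ s, (∑ b ∈ s, P a b) ^ 3 = ∑ a ∈ s, ∑ b ∈ s, ∑ c ∈ s, ∑ d ∈ s, P a b * P a c * P a d := by
  refine sum_congr rfl fun a _ => ?_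
  rw [pow_three, sum_mul_sum, sum_mul_sum]
  simp only [mul_sum, mul_assoc]

lemma sum_quadruple_star_products_eq :
    ∑ i ∈ s, ∑ j ∈ s, ∑ k ∈ s, ∑ l ∈ s,
        (P i j * P i k * P i l + P j i * P j k * P j l + P k i * P k j * P k l
          + P l i * P l j * P l k)
      = 4 * ∑ a ∈ s, (∑ b ∈ s, P a b) ^ 3 := by
  have h2 : ∑ i ∈ s, ∑ j ∈ s, ∑ k ∈ s, ∑ l ∈ s, P j i * P j k * P j l
      = ∑ i ∈ s, ∑ j ∈ s, ∑ k ∈ s, ∑ l ∈ s, P i j * P i k * P i l := sum_comm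
  have h3 : ∑ i ∈ s, ∑ j ∈ s, ∑ k ∈ s, ∑ l ∈ s, P k i * P k j * P k l
      = ∑ i ∈ s, ∑ j ∈ s, ∑ k ∈ s, ∑ l ∈ s, P i j * P i k * P i l := sum_comm_cycle
  have h4 : ∑ i ∈ s, ∑ j ∈ s, ∑ k ∈ s, ∑ l ∈ s, P l i * P l j * P l k
      = ∑ i ∈ s, ∑ j ∈ s, ∑ k ∈ s, ∑ l ∈ s, P i j * P i k * P i l :=
    (sum_congr rfl fun _ _ => sum_comm_cycle).trans sum_comm
  simp only [sum_add_distrib, h2, h3, h4, sum_pow_three_eq_sum_sum_sum_sum]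
  ring

end Cube

lemma four_div_one_sub_pow_three_le {x : ℝ} (hx0 : 0 ≤ x) (hx1 : x < 1) :
    4 * ((1 - x)⁻¹) ^ 3 ≤ 24 / ((1 - x) * (1 - x ^ 2) * (1 - x ^ 3)) := by
  have h1 : 0 < 1 - x := by linarith
  have h2 : 0 < 1 - x ^ 2 := by nlinarith
  have h3 : 0 < 1 - x ^ 3 := by nlinarith
  rw [inv_pow, ← div_eq_mul_inv, div_le_div_iff₀ (by positivity) (by positivity)]
  nlinarith [pow_pos h1 3, mul_pos (mul_pos h1 h2) h3]

theorem stmt1_general (x : ℝ) (hx0 : 0 ≤ x) (hx1 : x < 1) (n : ℕ) :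
    ∑ i ∈ Finset.Icc 1 n, ∑ j ∈ Finset.Icc 1 n, ∑ k ∈ Finset.Icc 1 n, ∑ l ∈ Finset.Icc 1 n,
        x ^ (i + j + k + l - 4 * min (min i j) (min k l))
      ≤ (24 / ((1 - x) * (1 - x ^ 2) * (1 - x ^ 3))) * n := by
  set s := Icc 1 n
  have hcube : ∑ a ∈ s, (∑ b ∈ s, powGap x a b) ^ 3 ≤ n * ((1 - x)⁻¹) ^ 3 := by
    calc ∑ a ∈ s, (∑ b ∈ s, powGap x a b) ^ 3 ≤ ∑ _a ∈ s, ((1 - x)⁻¹) ^ 3 :=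
          sum_le_sum fun a _ => pow_le_pow_left₀ (sum_nonneg fun b _ => powGap_nonneg hx0 a b)
            (sum_powGap_le hx0 hx1 s a) 3
      _ = n * ((1 - x)⁻¹) ^ 3 := by simp [s]
  calc _ ≤ _ := sum_le_sum fun i _ => sum_le_sum fun j _ => sum_le_sum fun k _ =>
          sum_le_sum fun l _ => pow_sub_four_min_le hx0 i j k l
    _ = 4 * ∑ a ∈ s, (∑ b ∈ s, powGap x a b) ^ 3 := sum_quadruple_star_products_eq s (powGap x)
    _ ≤ 4 * ((1 - x)⁻¹) ^ 3 * n := by linarith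
    _ ≤ _ := by gcongr; exact four_div_one_sub_pow_three_le hx0 hx1

theorem stmt1 (x : ℝ) (hx0 : 0 ≤ x) (hx1 : x < 1) (n : ℕ) (hn : 0 < n) :
    ∑ i ∈ Finset.Icc 1 n, ∑ j ∈ Finset.Icc 1 n, ∑ k ∈ Finset.Icc 1 n, ∑ l ∈ Finset.Icc 1 n,
        x ^ (i + j + k + l - 4 * min (min i j) (min k l))
      ≤ (24 / ((1 - x) * (1 - x ^ 2) * (1 - x ^ 3))) * n :=
  stmt1_general x hx0 hx1 n
end

section
/- For real numbers x, y with 0 ≤ x, y < 1 and any positive integer n, the quadruple sum ∑_{i,j,k,l=1}^{n} x^{|i-j|} x^{|k-l|} y^{i+j+k+l - 4·min(i,j,k,l)} is at most (8/((1-xy)²(1-y²)))·n. -/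
open Finset

lemma geo_le' (r : ℝ) (hr0 : 0 ≤ r) (hr1 : r < 1) (m : ℕ) :
    ∑ e ∈ range m, r ^ e ≤ 1 / (1 - r) := by
  have h1 : (0:ℝ) < 1 - r := by linarith
  rw [geom_sum_eq (by intro h; rw [h] at hr1; linarith : r ≠ 1)]
  have key : (r ^ m - 1) / (r - 1) = (1 - r ^ m) / (1 - r) := by
    rw [← neg_div_neg_eq]; ring_nf
  rw [key]
  have : (0:ℝ) ≤ r ^ m := by positivity
  gcongr
  linarith

lemma tail_le' (r : ℝ) (hr0 : 0 ≤ r) (hr1 : r < 1) (n a : ℕ) :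
    ∑ k ∈ Icc 1 n, (if a ≤ k then r ^ (k - a) else 0) ≤ 1 / (1 - r) := by
  rw [← Finset.sum_filter]
  have hfe : (Icc 1 n).filter (fun k => a ≤ k) = Ico (max 1 a) (n+1) := by
    ext k; simp [Finset.mem_filter, Finset.mem_Icc, Finset.mem_Ico]; omega
  rw [hfe, Finset.sum_Ico_eq_sum_range]
  calc ∑ i ∈ range (n + 1 - max 1 a), r ^ (max 1 a + i - a)
      ≤ ∑ i ∈ range (n + 1 - max 1 a), r ^ i := by
        apply Finset.sum_le_sum
        intro i _
        exact pow_le_pow_of_le_one hr0 hr1.le (by omega)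
    _ ≤ 1 / (1 - r) := geo_le' r hr0 hr1 _

lemma head_le' (r : ℝ) (hr0 : 0 ≤ r) (hr1 : r < 1) (n a : ℕ) :
    ∑ k ∈ Icc 1 n, (if k ≤ a then r ^ (a - k) else 0) ≤ 1 / (1 - r) := by
  rw [← Finset.sum_filter]
  have hfe : (Icc 1 n).filter (fun k => k ≤ a) = Ico 1 (min n a + 1) := by
    ext k; simp [Finset.mem_filter, Finset.mem_Icc, Finset.mem_Ico]; omega
  rw [hfe, Finset.sum_Ico_eq_sum_range]
  have hmin : min n a ≤ a := min_le_right _ _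
  calc ∑ i ∈ range (min n a + 1 - 1), r ^ (a - (1 + i))
      = ∑ i ∈ range (min n a), r ^ ((a - min n a) + (min n a - 1 - i)) := by
        rw [show min n a + 1 - 1 = min n a from rfl]
        apply Finset.sum_congr rfl
        intro i hi
        rw [Finset.mem_range] at hi
        congr 1
        omega
    _ = ∑ i ∈ range (min n a), r ^ ((a - min n a) + i) := by
        exact Finset.sum_range_reflect (fun i => r ^ ((a - min n a) + i)) (min n a)
    _ ≤ ∑ i ∈ range (min n a), r ^ i := by
        apply Finset.sum_le_sum
        intro i _
        exact pow_le_pow_of_le_one hr0 hr1.le (by omega)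
    _ ≤ 1 / (1 - r) := geo_le' r hr0 hr1 _

lemma abs_sum_le' (r : ℝ) (hr0 : 0 ≤ r) (hr1 : r < 1) (n a : ℕ) :
    ∑ k ∈ Icc 1 n, r ^ ((a:ℤ) - k).natAbs ≤ 2 / (1 - r) := by
  calc ∑ k ∈ Icc 1 n, r ^ ((a:ℤ) - k).natAbs
      ≤ ∑ k ∈ Icc 1 n, ((if a ≤ k then r ^ (k - a) else 0) + (if k ≤ a then r ^ (a - k) else 0)) := by
        apply Finset.sum_le_sum
        intro k _
        rcases le_total a k with h | h
        · have he : ((a:ℤ) - k).natAbs = k - a := by omega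
          rw [he, if_pos h]
          have h2 : (0:ℝ) ≤ if k ≤ a then r ^ (a - k) else 0 := by
            split <;> positivity
          linarith
        · have he : ((a:ℤ) - k).natAbs = a - k := by omega
          rw [he, if_pos h]
          have h2 : (0:ℝ) ≤ if a ≤ k then r ^ (k - a) else 0 := by
            split <;> positivity
          linarith
    _ = (∑ k ∈ Icc 1 n, (if a ≤ k then r ^ (k - a) else 0))
        + ∑ k ∈ Icc 1 n, (if k ≤ a then r ^ (a - k) else 0) := Finset.sum_add_distrib
    _ ≤ 1 / (1 - r) + 1 / (1 - r) := add_le_add (tail_le' r hr0 hr1 n a) (head_le' r hr0 hr1 n a)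
    _ = 2 / (1 - r) := by ring

theorem stmt2 (x y : ℝ) (hx0 : 0 ≤ x) (hx1 : x < 1) (hy0 : 0 ≤ y) (hy1 : y < 1)
    (n : ℕ) (hn : 0 < n) :
    ∑ i ∈ Finset.Icc 1 n, ∑ j ∈ Finset.Icc 1 n, ∑ k ∈ Finset.Icc 1 n, ∑ l ∈ Finset.Icc 1 n,
        x ^ ((i : ℤ) - j).natAbs * x ^ ((k : ℤ) - l).natAbs *
          y ^ (i + j + k + l - 4 * min (min i j) (min k l))
      ≤ (8 / ((1 - x * y) ^ 2 * (1 - y ^ 2))) * n := by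
  have ht0 : 0 ≤ x * y := mul_nonneg hx0 hy0
  have ht1 : x * y < 1 := by nlinarith
  have hs0 : 0 ≤ y ^ 2 := by positivity
  have hs1 : y ^ 2 < 1 := by nlinarith
  set t := x * y with htdef
  set s := y ^ 2 with hsdef
  have h1t : (0:ℝ) < 1 - t := by linarith
  have h1s : (0:ℝ) < 1 - s := by linarith
  have hC1 : (0:ℝ) ≤ 1 / (1 - t) := by positivity
  have hC2 : (0:ℝ) ≤ 2 / (1 - s) := by positivity
  have hC3 : (0:ℝ) ≤ 2 / (1 - t) := by positivity
  -- bound on the inner double sum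
  have HB : ∀ a : ℕ, ∑ k ∈ Icc 1 n, ∑ l ∈ Icc 1 n,
      t ^ ((k:ℤ) - l).natAbs * s ^ ((a:ℤ) - min k l).natAbs
      ≤ 2 / (1 - t) * (2 / (1 - s)) := by
    intro a
    have piece1 : ∑ k ∈ Icc 1 n, ∑ l ∈ Icc 1 n,
        (if k ≤ l then t ^ (l - k) else 0) * s ^ ((a:ℤ) - k).natAbs
        ≤ 1 / (1 - t) * (2 / (1 - s)) := by
      calc ∑ k ∈ Icc 1 n, ∑ l ∈ Icc 1 n,
            (if k ≤ l then t ^ (l - k) else 0) * s ^ ((a:ℤ) - k).natAbs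
          = ∑ k ∈ Icc 1 n, (∑ l ∈ Icc 1 n, (if k ≤ l then t ^ (l - k) else 0))
              * s ^ ((a:ℤ) - k).natAbs := by
            refine Finset.sum_congr rfl fun k _ => ?_
            rw [Finset.sum_mul]
        _ ≤ ∑ k ∈ Icc 1 n, (1 / (1 - t)) * s ^ ((a:ℤ) - k).natAbs := by
            refine Finset.sum_le_sum fun k _ => ?_
            exact mul_le_mul_of_nonneg_right (tail_le' t ht0 ht1 n k) (by positivity)
        _ = (1 / (1 - t)) * ∑ k ∈ Icc 1 n, s ^ ((a:ℤ) - k).natAbs := by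
            rw [Finset.mul_sum]
        _ ≤ 1 / (1 - t) * (2 / (1 - s)) :=
            mul_le_mul_of_nonneg_left (abs_sum_le' s hs0 hs1 n a) hC1
    have piece2 : ∑ k ∈ Icc 1 n, ∑ l ∈ Icc 1 n,
        (if l ≤ k then t ^ (k - l) else 0) * s ^ ((a:ℤ) - l).natAbs
        ≤ 1 / (1 - t) * (2 / (1 - s)) := by
      rw [Finset.sum_comm]
      calc ∑ l ∈ Icc 1 n, ∑ k ∈ Icc 1 n,
            (if l ≤ k then t ^ (k - l) else 0) * s ^ ((a:ℤ) - l).natAbs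
          = ∑ l ∈ Icc 1 n, (∑ k ∈ Icc 1 n, (if l ≤ k then t ^ (k - l) else 0))
              * s ^ ((a:ℤ) - l).natAbs := by
            refine Finset.sum_congr rfl fun l _ => ?_
            rw [Finset.sum_mul]
        _ ≤ ∑ l ∈ Icc 1 n, (1 / (1 - t)) * s ^ ((a:ℤ) - l).natAbs := by
            refine Finset.sum_le_sum fun l _ => ?_
            exact mul_le_mul_of_nonneg_right (tail_le' t ht0 ht1 n l) (by positivity)
        _ = (1 / (1 - t)) * ∑ l ∈ Icc 1 n, s ^ ((a:ℤ) - l).natAbs := by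
            rw [Finset.mul_sum]
        _ ≤ 1 / (1 - t) * (2 / (1 - s)) :=
            mul_le_mul_of_nonneg_left (abs_sum_le' s hs0 hs1 n a) hC1
    calc ∑ k ∈ Icc 1 n, ∑ l ∈ Icc 1 n,
          t ^ ((k:ℤ) - l).natAbs * s ^ ((a:ℤ) - min k l).natAbs
        ≤ ∑ k ∈ Icc 1 n, ∑ l ∈ Icc 1 n,
          ((if k ≤ l then t ^ (l - k) else 0) * s ^ ((a:ℤ) - k).natAbs
            + (if l ≤ k then t ^ (k - l) else 0) * s ^ ((a:ℤ) - l).natAbs) := by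
          refine Finset.sum_le_sum fun k _ => Finset.sum_le_sum fun l _ => ?_
          rcases le_total k l with h | h
          · have hm : min k l = k := min_eq_left h
            have he : ((k:ℤ) - l).natAbs = l - k := by omega
            rw [hm, he, if_pos h]
            have h2 : (0:ℝ) ≤ if l ≤ k then t ^ (k - l) else 0 := by split <;> positivity
            have h3 : (0:ℝ) ≤ s ^ ((a:ℤ) - l).natAbs := by positivity
            nlinarith [mul_nonneg h2 h3]
          · have hm : min k l = l := min_eq_right h
            have he : ((k:ℤ) - l).natAbs = k - l := by omega
            rw [hm, he, if_pos h]
            have h2 : (0:ℝ) ≤ if k ≤ l then t ^ (l - k) else 0 := by split <;> positivity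
            have h3 : (0:ℝ) ≤ s ^ ((a:ℤ) - k).natAbs := by positivity
            nlinarith [mul_nonneg h2 h3]
      _ = (∑ k ∈ Icc 1 n, ∑ l ∈ Icc 1 n,
            (if k ≤ l then t ^ (l - k) else 0) * s ^ ((a:ℤ) - k).natAbs)
          + ∑ k ∈ Icc 1 n, ∑ l ∈ Icc 1 n,
            (if l ≤ k then t ^ (k - l) else 0) * s ^ ((a:ℤ) - l).natAbs := by
          rw [← Finset.sum_add_distrib]
          exact Finset.sum_congr rfl fun k _ => Finset.sum_add_distrib
      _ ≤ 1 / (1 - t) * (2 / (1 - s)) + 1 / (1 - t) * (2 / (1 - s)) := add_le_add piece1 piece2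
      _ = 2 / (1 - t) * (2 / (1 - s)) := by ring
  calc ∑ i ∈ Finset.Icc 1 n, ∑ j ∈ Finset.Icc 1 n, ∑ k ∈ Finset.Icc 1 n, ∑ l ∈ Finset.Icc 1 n,
        x ^ ((i : ℤ) - j).natAbs * x ^ ((k : ℤ) - l).natAbs *
          y ^ (i + j + k + l - 4 * min (min i j) (min k l))
      = ∑ i ∈ Icc 1 n, ∑ j ∈ Icc 1 n, ∑ k ∈ Icc 1 n, ∑ l ∈ Icc 1 n,
        t ^ ((i:ℤ) - j).natAbs *
          (t ^ ((k:ℤ) - l).natAbs * s ^ (((min i j : ℕ):ℤ) - (min k l : ℕ)).natAbs) := by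
        refine Finset.sum_congr rfl fun i _ => Finset.sum_congr rfl fun j _ =>
          Finset.sum_congr rfl fun k _ => Finset.sum_congr rfl fun l _ => ?_
        have he : i + j + k + l - 4 * min (min i j) (min k l)
            = ((i:ℤ) - j).natAbs + ((k:ℤ) - l).natAbs
              + 2 * (((min i j : ℕ):ℤ) - (min k l : ℕ)).natAbs := by omega
        rw [he, htdef, hsdef, pow_add, pow_add, pow_mul, mul_pow, mul_pow]
        ring
    _ ≤ ∑ i ∈ Icc 1 n, ∑ j ∈ Icc 1 n,
        t ^ ((i:ℤ) - j).natAbs * (2 / (1 - t) * (2 / (1 - s))) := by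
        refine Finset.sum_le_sum fun i _ => Finset.sum_le_sum fun j _ => ?_
        rw [show (∑ k ∈ Icc 1 n, ∑ l ∈ Icc 1 n,
            t ^ ((i:ℤ) - j).natAbs *
              (t ^ ((k:ℤ) - l).natAbs * s ^ (((min i j : ℕ):ℤ) - (min k l : ℕ)).natAbs))
          = t ^ ((i:ℤ) - j).natAbs * ∑ k ∈ Icc 1 n, ∑ l ∈ Icc 1 n,
              (t ^ ((k:ℤ) - l).natAbs * s ^ (((min i j : ℕ):ℤ) - (min k l : ℕ)).natAbs) by
            simp [Finset.mul_sum]]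
        exact mul_le_mul_of_nonneg_left (HB (min i j)) (by positivity)
    _ = (2 / (1 - t) * (2 / (1 - s))) * ∑ i ∈ Icc 1 n, ∑ j ∈ Icc 1 n, t ^ ((i:ℤ) - j).natAbs := by
        rw [Finset.mul_sum]
        refine Finset.sum_congr rfl fun i _ => ?_
        rw [Finset.mul_sum]
        exact Finset.sum_congr rfl fun j _ => by ring
    _ ≤ (2 / (1 - t) * (2 / (1 - s))) * (n * (2 / (1 - t))) := by
        refine mul_le_mul_of_nonneg_left ?_ (by positivity)
        calc ∑ i ∈ Icc 1 n, ∑ j ∈ Icc 1 n, t ^ ((i:ℤ) - j).natAbs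
            ≤ ∑ i ∈ Icc 1 n, 2 / (1 - t) :=
              Finset.sum_le_sum fun i _ => abs_sum_le' t ht0 ht1 n i
          _ = n * (2 / (1 - t)) := by
              rw [Finset.sum_const, Nat.card_Icc]
              simp [nsmul_eq_mul]
    _ = (8 / ((1 - t) ^ 2 * (1 - s))) * n := by
        field_simp
        ring
end

section
/- For real numbers x, y with 0 ≤ x, y < 1 and any positive integer n, the quadruple sum ∑_{i,j,k,l=1}^{n} x^{|i-j|} x^{|k-l|} y^{|i-k|} y^{|j-l|} is at most (4/((1-x^{4/3})(1-y^{4/3})))^{3/2}·n. -/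
open Finset

private lemma st3_georange (q : ℝ) (hq0 : 0 ≤ q) (hq1 : q < 1) (m : ℕ) :
    ∑ i ∈ Finset.range m, q ^ i ≤ 1 / (1 - q) := by
  have h1q : (0:ℝ) < 1 - q := by linarith
  rw [geom_sum_eq (by linarith : q ≠ 1)]
  rw [show (q ^ m - 1) / (q - 1) = (1 - q ^ m) / (1 - q) by rw [← neg_div_neg_eq]; ring_nf]
  gcongr
  nlinarith [pow_nonneg hq0 m]


private lemma st3_geom (q : ℝ) (hq0 : 0 ≤ q) (hq1 : q < 1) (n j : ℕ)
    (hj : j ∈ Finset.Icc 1 n) :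
    ∑ i ∈ Finset.Icc 1 n, q ^ ((i : ℤ) - j).natAbs ≤ 2 / (1 - q) := by
  simp only [Finset.mem_Icc] at hj
  have h1q : (0:ℝ) < 1 - q := by linarith
  have hsplit : ∑ i ∈ Finset.Ico 1 (j+1), q ^ ((i : ℤ) - j).natAbs
      + ∑ i ∈ Finset.Ico (j+1) (n+1), q ^ ((i : ℤ) - j).natAbs
      = ∑ i ∈ Finset.Icc 1 n, q ^ ((i : ℤ) - j).natAbs := by
    rw [show Finset.Icc 1 n = Finset.Ico 1 (n+1) by rfl]
    exact Finset.sum_Ico_consecutive _ (by omega) (by omega)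
  rw [← hsplit]
  have p1 : ∑ i ∈ Finset.Ico 1 (j+1), q ^ ((i : ℤ) - j).natAbs ≤ 1 / (1-q) := by
    rw [Finset.sum_Ico_eq_sum_range]
    have : ∀ m ∈ Finset.range (j+1-1), q ^ (((1+m : ℕ) : ℤ) - j).natAbs = q ^ (j - 1 - m) := by
      intro m hm
      simp only [Finset.mem_range] at hm
      congr 1
      omega
    rw [Finset.sum_congr rfl this]
    rw [show j + 1 - 1 = j from by omega]
    rw [Finset.sum_range_reflect (fun i => q ^ i) j]
    exact st3_georange q hq0 hq1 j
  have p2 : ∑ i ∈ Finset.Ico (j+1) (n+1), q ^ ((i : ℤ) - j).natAbs ≤ 1 / (1-q) := by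
    rw [Finset.sum_Ico_eq_sum_range]
    calc ∑ m ∈ Finset.range (n+1-(j+1)), q ^ (((j+1+m : ℕ) : ℤ) - j).natAbs
        ≤ ∑ m ∈ Finset.range (n+1-(j+1)), q ^ m := by
          apply Finset.sum_le_sum
          intro m _
          rw [show (((j+1+m : ℕ) : ℤ) - j).natAbs = m + 1 from by omega]
          exact pow_le_pow_of_le_one hq0 hq1.le (by omega)
      _ ≤ 1 / (1-q) := st3_georange q hq0 hq1 _
  calc _ ≤ 1/(1-q) + 1/(1-q) := add_le_add p1 p2
    _ = 2/(1-q) := by ring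

private lemma st3_geom' (q : ℝ) (hq0 : 0 ≤ q) (hq1 : q < 1) (n j : ℕ)
    (hj : j ∈ Finset.Icc 1 n) :
    ∑ i ∈ Finset.Icc 1 n, q ^ ((j : ℤ) - i).natAbs ≤ 2 / (1 - q) := by
  calc ∑ i ∈ Finset.Icc 1 n, q ^ ((j : ℤ) - i).natAbs
      = ∑ i ∈ Finset.Icc 1 n, q ^ ((i : ℤ) - j).natAbs :=
        Finset.sum_congr rfl fun i _ => by
          rw [show ((j : ℤ) - i).natAbs = ((i : ℤ) - j).natAbs from by omega]
    _ ≤ 2 / (1 - q) := st3_geom q hq0 hq1 n j hj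

private lemma st3_chain (q : ℝ) (hq0 : 0 ≤ q) (hq1 : q < 1) (n : ℕ) :
    ∑ a ∈ Finset.Icc 1 n, ∑ b ∈ Finset.Icc 1 n, ∑ c ∈ Finset.Icc 1 n, ∑ d ∈ Finset.Icc 1 n,
        q ^ ((a : ℤ) - b).natAbs * q ^ ((b : ℤ) - c).natAbs * q ^ ((c : ℤ) - d).natAbs
      ≤ n * (2 / (1 - q)) ^ 3 := by
  have h1q : (0:ℝ) < 1 - q := by linarith
  have hG : (0:ℝ) ≤ 2 / (1 - q) := by positivity
  calc ∑ a ∈ Finset.Icc 1 n, ∑ b ∈ Finset.Icc 1 n, ∑ c ∈ Finset.Icc 1 n, ∑ d ∈ Finset.Icc 1 n,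
          q ^ ((a : ℤ) - b).natAbs * q ^ ((b : ℤ) - c).natAbs * q ^ ((c : ℤ) - d).natAbs
      = ∑ a ∈ Finset.Icc 1 n, ∑ b ∈ Finset.Icc 1 n, ∑ c ∈ Finset.Icc 1 n,
          q ^ ((a : ℤ) - b).natAbs * q ^ ((b : ℤ) - c).natAbs
            * ∑ d ∈ Finset.Icc 1 n, q ^ ((c : ℤ) - d).natAbs := by
        simp only [← Finset.mul_sum]
    _ ≤ ∑ a ∈ Finset.Icc 1 n, ∑ b ∈ Finset.Icc 1 n, ∑ c ∈ Finset.Icc 1 n,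
          q ^ ((a : ℤ) - b).natAbs * q ^ ((b : ℤ) - c).natAbs * (2 / (1 - q)) := by
        gcongr with a ha b hb c hc
        exact st3_geom' q hq0 hq1 n c hc
    _ = ∑ a ∈ Finset.Icc 1 n, ∑ b ∈ Finset.Icc 1 n,
          q ^ ((a : ℤ) - b).natAbs * (∑ c ∈ Finset.Icc 1 n, q ^ ((b : ℤ) - c).natAbs)
            * (2 / (1 - q)) := by
        simp only [Finset.sum_mul, Finset.mul_sum, mul_assoc]
    _ ≤ ∑ a ∈ Finset.Icc 1 n, ∑ b ∈ Finset.Icc 1 n,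
          q ^ ((a : ℤ) - b).natAbs * (2 / (1 - q)) * (2 / (1 - q)) := by
        gcongr with a ha b hb
        exact st3_geom' q hq0 hq1 n b hb
    _ = ∑ a ∈ Finset.Icc 1 n,
          (∑ b ∈ Finset.Icc 1 n, q ^ ((a : ℤ) - b).natAbs) * (2 / (1 - q)) * (2 / (1 - q)) := by
        simp only [Finset.sum_mul]
    _ ≤ ∑ a ∈ Finset.Icc 1 n, (2 / (1 - q)) * (2 / (1 - q)) * (2 / (1 - q)) := by
        gcongr with a ha
        exact st3_geom' q hq0 hq1 n a ha
    _ = n * (2 / (1 - q)) ^ 3 := by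
        rw [Finset.sum_const, Nat.card_Icc]
        rw [show n + 1 - 1 = n from rfl]
        rw [nsmul_eq_mul]
        ring

private lemma st3_swapA (s : Finset ℕ) (f : ℕ → ℕ → ℕ → ℕ → ℝ) :
    ∑ a ∈ s, ∑ b ∈ s, ∑ c ∈ s, ∑ d ∈ s, f a b c d
      = ∑ b ∈ s, ∑ a ∈ s, ∑ c ∈ s, ∑ d ∈ s, f a b c d := Finset.sum_comm

private lemma st3_swapB (s : Finset ℕ) (f : ℕ → ℕ → ℕ → ℕ → ℝ) :
    ∑ a ∈ s, ∑ b ∈ s, ∑ c ∈ s, ∑ d ∈ s, f a b c d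
      = ∑ a ∈ s, ∑ c ∈ s, ∑ b ∈ s, ∑ d ∈ s, f a b c d :=
  Finset.sum_congr rfl fun _ _ => Finset.sum_comm

private lemma st3_swapC (s : Finset ℕ) (f : ℕ → ℕ → ℕ → ℕ → ℝ) :
    ∑ a ∈ s, ∑ b ∈ s, ∑ c ∈ s, ∑ d ∈ s, f a b c d
      = ∑ a ∈ s, ∑ b ∈ s, ∑ d ∈ s, ∑ c ∈ s, f a b c d :=
  Finset.sum_congr rfl fun _ _ => Finset.sum_congr rfl fun _ _ => Finset.sum_comm

private lemma st3_amgm (x : ℝ) (hx0 : 0 ≤ x) (e1 e2 e3 e4 : ℕ) :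
    x ^ (e1 + e2 + e3 + e4)
      ≤ ((x ^ ((4:ℝ)/3)) ^ (e1 + e2 + e3) + (x ^ ((4:ℝ)/3)) ^ (e2 + e3 + e4)
          + (x ^ ((4:ℝ)/3)) ^ (e3 + e4 + e1) + (x ^ ((4:ℝ)/3)) ^ (e4 + e1 + e2)) / 4 := by
  have hX0 : 0 ≤ x ^ ((4:ℝ)/3) := Real.rpow_nonneg hx0 _
  have hprod : (x ^ (e1 + e2 + e3 + e4)) ^ 4
      ≤ (x ^ ((4:ℝ)/3)) ^ (e1 + e2 + e3) * (x ^ ((4:ℝ)/3)) ^ (e2 + e3 + e4)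
        * (x ^ ((4:ℝ)/3)) ^ (e3 + e4 + e1) * (x ^ ((4:ℝ)/3)) ^ (e4 + e1 + e2) := by
    rcases eq_or_lt_of_le hx0 with h | h
    · rcases Nat.eq_zero_or_pos (e1 + e2 + e3 + e4) with hE | hE
      · have he1 : e1 = 0 := by omega
        have he2 : e2 = 0 := by omega
        have he3 : e3 = 0 := by omega
        have he4 : e4 = 0 := by omega
        subst he1; subst he2; subst he3; subst he4
        norm_num
      · rw [← h, zero_pow (by omega : e1 + e2 + e3 + e4 ≠ 0)]
        rw [zero_pow (by norm_num : (4:ℕ) ≠ 0)]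
        positivity
    · have hXpow : ∀ m : ℕ, (x ^ ((4:ℝ)/3)) ^ m = x ^ (((4:ℝ)/3) * m) := by
        intro m
        rw [← Real.rpow_natCast (x ^ ((4:ℝ)/3)) m, ← Real.rpow_mul hx0]
      apply le_of_eq
      rw [hXpow, hXpow, hXpow, hXpow, ← Real.rpow_add h, ← Real.rpow_add h, ← Real.rpow_add h]
      rw [← pow_mul, ← Real.rpow_natCast x ((e1+e2+e3+e4) * 4)]
      congr 1
      push_cast
      ring
  set X : ℝ := x ^ ((4:ℝ)/3)
  set t : ℝ := x ^ (e1 + e2 + e3 + e4) with ht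
  set u : ℝ := X ^ (e1 + e2 + e3) with hu
  set v : ℝ := X ^ (e2 + e3 + e4) with hv
  set w : ℝ := X ^ (e3 + e4 + e1) with hw
  set z : ℝ := X ^ (e4 + e1 + e2) with hz
  have ht0 : 0 ≤ t := pow_nonneg hx0 _
  have hu0 : 0 ≤ u := pow_nonneg hX0 _
  have hv0 : 0 ≤ v := pow_nonneg hX0 _
  have hw0 : 0 ≤ w := pow_nonneg hX0 _
  have hz0 : 0 ≤ z := pow_nonneg hX0 _
  have s0 : (0:ℝ) ≤ (u + v + w + z) / 4 := by positivity
  have key : t ^ 4 ≤ ((u + v + w + z) / 4) ^ 4 := by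
    have h1 : u * v ≤ ((u + v) / 2) ^ 2 := by nlinarith [sq_nonneg (u - v)]
    have h2 : w * z ≤ ((w + z) / 2) ^ 2 := by nlinarith [sq_nonneg (w - z)]
    have h3 : ((u + v) / 2) * ((w + z) / 2) ≤ ((u + v + w + z) / 4) ^ 2 := by
      nlinarith [sq_nonneg ((u + v) / 2 - (w + z) / 2)]
    calc t ^ 4 ≤ u * v * w * z := hprod
      _ = (u * v) * (w * z) := by ring
      _ ≤ ((u + v) / 2) ^ 2 * ((w + z) / 2) ^ 2 := by
          apply mul_le_mul h1 h2 (by positivity) (by positivity)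
      _ = (((u + v) / 2) * ((w + z) / 2)) ^ 2 := by ring
      _ ≤ (((u + v + w + z) / 4) ^ 2) ^ 2 := by
          apply pow_le_pow_left₀ (by positivity) h3
      _ = ((u + v + w + z) / 4) ^ 4 := by ring
  have := le_of_pow_le_pow_left₀ (by norm_num : (4:ℕ) ≠ 0) s0 key
  linarith

private lemma st3_fourth' (q Q : ℝ) (hq0 : 0 ≤ q) (hQ0 : 0 ≤ Q) (hQ1 : Q < 1)
    (hamgm : ∀ e1 e2 e3 e4 : ℕ,
      q ^ (e1 + e2 + e3 + e4)
        ≤ (Q ^ (e1 + e2 + e3) + Q ^ (e2 + e3 + e4) + Q ^ (e3 + e4 + e1) + Q ^ (e4 + e1 + e2)) / 4)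
    (n : ℕ) :
    ∑ j ∈ Finset.Icc 1 n, ∑ k ∈ Finset.Icc 1 n,
        (∑ i ∈ Finset.Icc 1 n, q ^ ((i:ℤ) - j).natAbs * q ^ ((i:ℤ) - k).natAbs) ^ 2
      ≤ n * (2 / (1 - Q)) ^ 3 := by
  have hS1 : ∑ j ∈ Finset.Icc 1 n, ∑ k ∈ Finset.Icc 1 n, ∑ i ∈ Finset.Icc 1 n,
        ∑ l ∈ Finset.Icc 1 n,
        Q ^ (((i:ℤ) - j).natAbs + ((j:ℤ) - l).natAbs + ((l:ℤ) - k).natAbs)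
      ≤ n * (2 / (1 - Q)) ^ 3 := by
    calc ∑ j ∈ Finset.Icc 1 n, ∑ k ∈ Finset.Icc 1 n, ∑ i ∈ Finset.Icc 1 n,
          ∑ l ∈ Finset.Icc 1 n,
          Q ^ (((i:ℤ) - j).natAbs + ((j:ℤ) - l).natAbs + ((l:ℤ) - k).natAbs)
        = ∑ j ∈ Finset.Icc 1 n, ∑ k ∈ Finset.Icc 1 n, ∑ i ∈ Finset.Icc 1 n,
          ∑ l ∈ Finset.Icc 1 n,
          Q ^ ((i:ℤ) - j).natAbs * Q ^ ((j:ℤ) - l).natAbs * Q ^ ((l:ℤ) - k).natAbs := by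
          simp only [pow_add]
      _ = ∑ i ∈ Finset.Icc 1 n, ∑ j ∈ Finset.Icc 1 n, ∑ l ∈ Finset.Icc 1 n,
          ∑ k ∈ Finset.Icc 1 n,
          Q ^ ((i:ℤ) - j).natAbs * Q ^ ((j:ℤ) - l).natAbs * Q ^ ((l:ℤ) - k).natAbs :=
          (st3_swapB _ _).trans ((st3_swapA _ _).trans (st3_swapC _ _))
      _ ≤ n * (2 / (1 - Q)) ^ 3 := st3_chain Q hQ0 hQ1 n
  have hS2 : ∑ j ∈ Finset.Icc 1 n, ∑ k ∈ Finset.Icc 1 n, ∑ i ∈ Finset.Icc 1 n,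
        ∑ l ∈ Finset.Icc 1 n,
        Q ^ (((j:ℤ) - l).natAbs + ((l:ℤ) - k).natAbs + ((k:ℤ) - i).natAbs)
      ≤ n * (2 / (1 - Q)) ^ 3 := by
    calc ∑ j ∈ Finset.Icc 1 n, ∑ k ∈ Finset.Icc 1 n, ∑ i ∈ Finset.Icc 1 n,
          ∑ l ∈ Finset.Icc 1 n,
          Q ^ (((j:ℤ) - l).natAbs + ((l:ℤ) - k).natAbs + ((k:ℤ) - i).natAbs)
        = ∑ j ∈ Finset.Icc 1 n, ∑ k ∈ Finset.Icc 1 n, ∑ i ∈ Finset.Icc 1 n,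
          ∑ l ∈ Finset.Icc 1 n,
          Q ^ ((j:ℤ) - l).natAbs * Q ^ ((l:ℤ) - k).natAbs * Q ^ ((k:ℤ) - i).natAbs := by
          simp only [pow_add]
      _ = ∑ j ∈ Finset.Icc 1 n, ∑ l ∈ Finset.Icc 1 n, ∑ k ∈ Finset.Icc 1 n,
          ∑ i ∈ Finset.Icc 1 n,
          Q ^ ((j:ℤ) - l).natAbs * Q ^ ((l:ℤ) - k).natAbs * Q ^ ((k:ℤ) - i).natAbs :=
          (st3_swapC _ _).trans (st3_swapB _ _)
      _ ≤ n * (2 / (1 - Q)) ^ 3 := st3_chain Q hQ0 hQ1 n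
  have hS3 : ∑ j ∈ Finset.Icc 1 n, ∑ k ∈ Finset.Icc 1 n, ∑ i ∈ Finset.Icc 1 n,
        ∑ l ∈ Finset.Icc 1 n,
        Q ^ (((l:ℤ) - k).natAbs + ((k:ℤ) - i).natAbs + ((i:ℤ) - j).natAbs)
      ≤ n * (2 / (1 - Q)) ^ 3 := by
    calc ∑ j ∈ Finset.Icc 1 n, ∑ k ∈ Finset.Icc 1 n, ∑ i ∈ Finset.Icc 1 n,
          ∑ l ∈ Finset.Icc 1 n,
          Q ^ (((l:ℤ) - k).natAbs + ((k:ℤ) - i).natAbs + ((i:ℤ) - j).natAbs)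
        = ∑ j ∈ Finset.Icc 1 n, ∑ k ∈ Finset.Icc 1 n, ∑ i ∈ Finset.Icc 1 n,
          ∑ l ∈ Finset.Icc 1 n,
          Q ^ ((j:ℤ) - i).natAbs * Q ^ ((i:ℤ) - k).natAbs * Q ^ ((k:ℤ) - l).natAbs := by
          refine Finset.sum_congr rfl fun j _ => Finset.sum_congr rfl fun k _ =>
            Finset.sum_congr rfl fun i _ => Finset.sum_congr rfl fun l _ => ?_
          rw [pow_add, pow_add]
          rw [show ((l:ℤ) - k).natAbs = ((k:ℤ) - l).natAbs from by omega,
            show ((k:ℤ) - i).natAbs = ((i:ℤ) - k).natAbs from by omega,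
            show ((i:ℤ) - j).natAbs = ((j:ℤ) - i).natAbs from by omega]
          ring
      _ = ∑ j ∈ Finset.Icc 1 n, ∑ i ∈ Finset.Icc 1 n, ∑ k ∈ Finset.Icc 1 n,
          ∑ l ∈ Finset.Icc 1 n,
          Q ^ ((j:ℤ) - i).natAbs * Q ^ ((i:ℤ) - k).natAbs * Q ^ ((k:ℤ) - l).natAbs :=
          st3_swapB _ _
      _ ≤ n * (2 / (1 - Q)) ^ 3 := st3_chain Q hQ0 hQ1 n
  have hS4 : ∑ j ∈ Finset.Icc 1 n, ∑ k ∈ Finset.Icc 1 n, ∑ i ∈ Finset.Icc 1 n,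
        ∑ l ∈ Finset.Icc 1 n,
        Q ^ (((k:ℤ) - i).natAbs + ((i:ℤ) - j).natAbs + ((j:ℤ) - l).natAbs)
      ≤ n * (2 / (1 - Q)) ^ 3 := by
    calc ∑ j ∈ Finset.Icc 1 n, ∑ k ∈ Finset.Icc 1 n, ∑ i ∈ Finset.Icc 1 n,
          ∑ l ∈ Finset.Icc 1 n,
          Q ^ (((k:ℤ) - i).natAbs + ((i:ℤ) - j).natAbs + ((j:ℤ) - l).natAbs)
        = ∑ j ∈ Finset.Icc 1 n, ∑ k ∈ Finset.Icc 1 n, ∑ i ∈ Finset.Icc 1 n,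
          ∑ l ∈ Finset.Icc 1 n,
          Q ^ ((k:ℤ) - i).natAbs * Q ^ ((i:ℤ) - j).natAbs * Q ^ ((j:ℤ) - l).natAbs := by
          simp only [pow_add]
      _ = ∑ k ∈ Finset.Icc 1 n, ∑ i ∈ Finset.Icc 1 n, ∑ j ∈ Finset.Icc 1 n,
          ∑ l ∈ Finset.Icc 1 n,
          Q ^ ((k:ℤ) - i).natAbs * Q ^ ((i:ℤ) - j).natAbs * Q ^ ((j:ℤ) - l).natAbs :=
          (st3_swapA _ _).trans (st3_swapB _ _)
      _ ≤ n * (2 / (1 - Q)) ^ 3 := st3_chain Q hQ0 hQ1 n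
  calc ∑ j ∈ Finset.Icc 1 n, ∑ k ∈ Finset.Icc 1 n,
        (∑ i ∈ Finset.Icc 1 n, q ^ ((i:ℤ) - j).natAbs * q ^ ((i:ℤ) - k).natAbs) ^ 2
      = ∑ j ∈ Finset.Icc 1 n, ∑ k ∈ Finset.Icc 1 n, ∑ i ∈ Finset.Icc 1 n,
        ∑ l ∈ Finset.Icc 1 n,
        (q ^ ((i:ℤ) - j).natAbs * q ^ ((i:ℤ) - k).natAbs)
          * (q ^ ((l:ℤ) - j).natAbs * q ^ ((l:ℤ) - k).natAbs) := by
        refine Finset.sum_congr rfl fun j _ => Finset.sum_congr rfl fun k _ => ?_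
        rw [sq, Finset.sum_mul_sum]
    _ = ∑ j ∈ Finset.Icc 1 n, ∑ k ∈ Finset.Icc 1 n, ∑ i ∈ Finset.Icc 1 n,
        ∑ l ∈ Finset.Icc 1 n,
        q ^ (((i:ℤ) - j).natAbs + ((j:ℤ) - l).natAbs + ((l:ℤ) - k).natAbs
          + ((k:ℤ) - i).natAbs) := by
        refine Finset.sum_congr rfl fun j _ => Finset.sum_congr rfl fun k _ =>
          Finset.sum_congr rfl fun i _ => Finset.sum_congr rfl fun l _ => ?_
        rw [pow_add, pow_add, pow_add]
        rw [show ((j:ℤ) - l).natAbs = ((l:ℤ) - j).natAbs from by omega,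
          show ((k:ℤ) - i).natAbs = ((i:ℤ) - k).natAbs from by omega]
        ring
    _ ≤ ∑ j ∈ Finset.Icc 1 n, ∑ k ∈ Finset.Icc 1 n, ∑ i ∈ Finset.Icc 1 n,
        ∑ l ∈ Finset.Icc 1 n,
        (Q ^ (((i:ℤ) - j).natAbs + ((j:ℤ) - l).natAbs + ((l:ℤ) - k).natAbs)
          + Q ^ (((j:ℤ) - l).natAbs + ((l:ℤ) - k).natAbs + ((k:ℤ) - i).natAbs)
          + Q ^ (((l:ℤ) - k).natAbs + ((k:ℤ) - i).natAbs + ((i:ℤ) - j).natAbs)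
          + Q ^ (((k:ℤ) - i).natAbs + ((i:ℤ) - j).natAbs + ((j:ℤ) - l).natAbs)) / 4 := by
        refine Finset.sum_le_sum fun j _ => Finset.sum_le_sum fun k _ =>
          Finset.sum_le_sum fun i _ => Finset.sum_le_sum fun l _ => hamgm _ _ _ _
    _ = (∑ j ∈ Finset.Icc 1 n, ∑ k ∈ Finset.Icc 1 n, ∑ i ∈ Finset.Icc 1 n,
          ∑ l ∈ Finset.Icc 1 n,
          Q ^ (((i:ℤ) - j).natAbs + ((j:ℤ) - l).natAbs + ((l:ℤ) - k).natAbs)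
        + ∑ j ∈ Finset.Icc 1 n, ∑ k ∈ Finset.Icc 1 n, ∑ i ∈ Finset.Icc 1 n,
          ∑ l ∈ Finset.Icc 1 n,
          Q ^ (((j:ℤ) - l).natAbs + ((l:ℤ) - k).natAbs + ((k:ℤ) - i).natAbs)
        + ∑ j ∈ Finset.Icc 1 n, ∑ k ∈ Finset.Icc 1 n, ∑ i ∈ Finset.Icc 1 n,
          ∑ l ∈ Finset.Icc 1 n,
          Q ^ (((l:ℤ) - k).natAbs + ((k:ℤ) - i).natAbs + ((i:ℤ) - j).natAbs)
        + ∑ j ∈ Finset.Icc 1 n, ∑ k ∈ Finset.Icc 1 n, ∑ i ∈ Finset.Icc 1 n,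
          ∑ l ∈ Finset.Icc 1 n,
          Q ^ (((k:ℤ) - i).natAbs + ((i:ℤ) - j).natAbs + ((j:ℤ) - l).natAbs)) / 4 := by
        simp only [← Finset.sum_div, Finset.sum_add_distrib]
    _ ≤ (n * (2 / (1 - Q)) ^ 3 + n * (2 / (1 - Q)) ^ 3 + n * (2 / (1 - Q)) ^ 3
          + n * (2 / (1 - Q)) ^ 3) / 4 := by
        linarith [hS1, hS2, hS3, hS4]
    _ = n * (2 / (1 - Q)) ^ 3 := by ring

theorem stmt3 (x y : ℝ) (hx0 : 0 ≤ x) (hx1 : x < 1) (hy0 : 0 ≤ y) (hy1 : y < 1)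
    (n : ℕ) (hn : 0 < n) :
    ∑ i ∈ Finset.Icc 1 n, ∑ j ∈ Finset.Icc 1 n, ∑ k ∈ Finset.Icc 1 n, ∑ l ∈ Finset.Icc 1 n,
        x ^ ((i : ℤ) - j).natAbs * x ^ ((k : ℤ) - l).natAbs *
          (y ^ ((i : ℤ) - k).natAbs * y ^ ((j : ℤ) - l).natAbs)
      ≤ (4 / ((1 - x ^ ((4 : ℝ) / 3)) * (1 - y ^ ((4 : ℝ) / 3)))) ^ ((3 : ℝ) / 2) * n := by
  have hX0 : 0 ≤ x ^ ((4:ℝ)/3) := Real.rpow_nonneg hx0 _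
  have hY0 : 0 ≤ y ^ ((4:ℝ)/3) := Real.rpow_nonneg hy0 _
  have hX1 : x ^ ((4:ℝ)/3) < 1 := Real.rpow_lt_one hx0 hx1 (by norm_num)
  have hY1 : y ^ ((4:ℝ)/3) < 1 := Real.rpow_lt_one hy0 hy1 (by norm_num)
  have hDX : (0:ℝ) < 1 - x ^ ((4:ℝ)/3) := by linarith
  have hDY : (0:ℝ) < 1 - y ^ ((4:ℝ)/3) := by linarith
  -- Step 1 : S = ∑ i ∑ l M i l * M l i
  have hSM : ∑ i ∈ Finset.Icc 1 n, ∑ j ∈ Finset.Icc 1 n, ∑ k ∈ Finset.Icc 1 n,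
        ∑ l ∈ Finset.Icc 1 n,
        x ^ ((i : ℤ) - j).natAbs * x ^ ((k : ℤ) - l).natAbs *
          (y ^ ((i : ℤ) - k).natAbs * y ^ ((j : ℤ) - l).natAbs)
      = ∑ i ∈ Finset.Icc 1 n, ∑ l ∈ Finset.Icc 1 n,
          (∑ j ∈ Finset.Icc 1 n, x ^ ((i : ℤ) - j).natAbs * y ^ ((j : ℤ) - l).natAbs)
          * (∑ k ∈ Finset.Icc 1 n, x ^ ((l : ℤ) - k).natAbs * y ^ ((k : ℤ) - i).natAbs) := by
    calc ∑ i ∈ Finset.Icc 1 n, ∑ j ∈ Finset.Icc 1 n, ∑ k ∈ Finset.Icc 1 n,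
          ∑ l ∈ Finset.Icc 1 n,
          x ^ ((i : ℤ) - j).natAbs * x ^ ((k : ℤ) - l).natAbs *
            (y ^ ((i : ℤ) - k).natAbs * y ^ ((j : ℤ) - l).natAbs)
        = ∑ i ∈ Finset.Icc 1 n, ∑ j ∈ Finset.Icc 1 n, ∑ k ∈ Finset.Icc 1 n,
          ∑ l ∈ Finset.Icc 1 n,
          (x ^ ((i : ℤ) - j).natAbs * y ^ ((j : ℤ) - l).natAbs)
            * (x ^ ((l : ℤ) - k).natAbs * y ^ ((k : ℤ) - i).natAbs) := by
          refine Finset.sum_congr rfl fun i _ => Finset.sum_congr rfl fun j _ =>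
            Finset.sum_congr rfl fun k _ => Finset.sum_congr rfl fun l _ => ?_
          rw [show ((k:ℤ) - l).natAbs = ((l:ℤ) - k).natAbs from by omega,
            show ((i:ℤ) - k).natAbs = ((k:ℤ) - i).natAbs from by omega]
          ring
      _ = ∑ i ∈ Finset.Icc 1 n, ∑ l ∈ Finset.Icc 1 n, ∑ j ∈ Finset.Icc 1 n,
          ∑ k ∈ Finset.Icc 1 n,
          (x ^ ((i : ℤ) - j).natAbs * y ^ ((j : ℤ) - l).natAbs)
            * (x ^ ((l : ℤ) - k).natAbs * y ^ ((k : ℤ) - i).natAbs) :=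
          (st3_swapC _ _).trans (st3_swapB _ _)
      _ = ∑ i ∈ Finset.Icc 1 n, ∑ l ∈ Finset.Icc 1 n,
          (∑ j ∈ Finset.Icc 1 n, x ^ ((i : ℤ) - j).natAbs * y ^ ((j : ℤ) - l).natAbs)
          * (∑ k ∈ Finset.Icc 1 n, x ^ ((l : ℤ) - k).natAbs * y ^ ((k : ℤ) - i).natAbs) := by
          refine Finset.sum_congr rfl fun i _ => Finset.sum_congr rfl fun l _ => ?_
          rw [Finset.sum_mul_sum]
  -- Step 2 : Cauchy–Schwarz diagonalization
  have hCS1 : ∑ i ∈ Finset.Icc 1 n, ∑ l ∈ Finset.Icc 1 n,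
        (∑ j ∈ Finset.Icc 1 n, x ^ ((i : ℤ) - j).natAbs * y ^ ((j : ℤ) - l).natAbs)
        * (∑ k ∈ Finset.Icc 1 n, x ^ ((l : ℤ) - k).natAbs * y ^ ((k : ℤ) - i).natAbs)
      ≤ ∑ i ∈ Finset.Icc 1 n, ∑ l ∈ Finset.Icc 1 n,
        (∑ j ∈ Finset.Icc 1 n, x ^ ((i : ℤ) - j).natAbs * y ^ ((j : ℤ) - l).natAbs) ^ 2 := by
    have h2 : ∑ i ∈ Finset.Icc 1 n, ∑ l ∈ Finset.Icc 1 n,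
        (∑ k ∈ Finset.Icc 1 n, x ^ ((l : ℤ) - k).natAbs * y ^ ((k : ℤ) - i).natAbs) ^ 2
        = ∑ i ∈ Finset.Icc 1 n, ∑ l ∈ Finset.Icc 1 n,
        (∑ j ∈ Finset.Icc 1 n, x ^ ((i : ℤ) - j).natAbs * y ^ ((j : ℤ) - l).natAbs) ^ 2 :=
      Finset.sum_comm
    have h1 : ∑ i ∈ Finset.Icc 1 n, ∑ l ∈ Finset.Icc 1 n,
        (∑ j ∈ Finset.Icc 1 n, x ^ ((i : ℤ) - j).natAbs * y ^ ((j : ℤ) - l).natAbs)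
        * (∑ k ∈ Finset.Icc 1 n, x ^ ((l : ℤ) - k).natAbs * y ^ ((k : ℤ) - i).natAbs)
      ≤ (∑ i ∈ Finset.Icc 1 n, ∑ l ∈ Finset.Icc 1 n,
          (∑ j ∈ Finset.Icc 1 n, x ^ ((i : ℤ) - j).natAbs * y ^ ((j : ℤ) - l).natAbs) ^ 2
        + ∑ i ∈ Finset.Icc 1 n, ∑ l ∈ Finset.Icc 1 n,
          (∑ k ∈ Finset.Icc 1 n, x ^ ((l : ℤ) - k).natAbs * y ^ ((k : ℤ) - i).natAbs) ^ 2)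
        / 2 := by
      rw [show (∑ i ∈ Finset.Icc 1 n, ∑ l ∈ Finset.Icc 1 n,
          (∑ j ∈ Finset.Icc 1 n, x ^ ((i : ℤ) - j).natAbs * y ^ ((j : ℤ) - l).natAbs) ^ 2
        + ∑ i ∈ Finset.Icc 1 n, ∑ l ∈ Finset.Icc 1 n,
          (∑ k ∈ Finset.Icc 1 n, x ^ ((l : ℤ) - k).natAbs * y ^ ((k : ℤ) - i).natAbs) ^ 2)
        = ∑ i ∈ Finset.Icc 1 n, ∑ l ∈ Finset.Icc 1 n,
          ((∑ j ∈ Finset.Icc 1 n, x ^ ((i : ℤ) - j).natAbs * y ^ ((j : ℤ) - l).natAbs) ^ 2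
          + (∑ k ∈ Finset.Icc 1 n, x ^ ((l : ℤ) - k).natAbs * y ^ ((k : ℤ) - i).natAbs) ^ 2)
        from by simp only [Finset.sum_add_distrib]]
      rw [Finset.sum_div]
      refine Finset.sum_le_sum fun i _ => ?_
      rw [Finset.sum_div]
      refine Finset.sum_le_sum fun l _ => ?_
      nlinarith [sq_nonneg
        ((∑ j ∈ Finset.Icc 1 n, x ^ ((i : ℤ) - j).natAbs * y ^ ((j : ℤ) - l).natAbs)
          - ∑ k ∈ Finset.Icc 1 n, x ^ ((l : ℤ) - k).natAbs * y ^ ((k : ℤ) - i).natAbs)]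
    calc _ ≤ _ := h1
      _ = ∑ i ∈ Finset.Icc 1 n, ∑ l ∈ Finset.Icc 1 n,
          (∑ j ∈ Finset.Icc 1 n, x ^ ((i : ℤ) - j).natAbs * y ^ ((j : ℤ) - l).natAbs) ^ 2 := by
          rw [h2]; ring
  -- Step 3 : rewrite ∑ M² as a Frobenius pairing
  have hW : ∑ i ∈ Finset.Icc 1 n, ∑ l ∈ Finset.Icc 1 n,
        (∑ j ∈ Finset.Icc 1 n, x ^ ((i : ℤ) - j).natAbs * y ^ ((j : ℤ) - l).natAbs) ^ 2
      = ∑ j ∈ Finset.Icc 1 n, ∑ k ∈ Finset.Icc 1 n,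
          (∑ i ∈ Finset.Icc 1 n, x ^ ((i : ℤ) - j).natAbs * x ^ ((i : ℤ) - k).natAbs)
          * (∑ l ∈ Finset.Icc 1 n, y ^ ((j : ℤ) - l).natAbs * y ^ ((k : ℤ) - l).natAbs) := by
    calc ∑ i ∈ Finset.Icc 1 n, ∑ l ∈ Finset.Icc 1 n,
          (∑ j ∈ Finset.Icc 1 n, x ^ ((i : ℤ) - j).natAbs * y ^ ((j : ℤ) - l).natAbs) ^ 2
        = ∑ i ∈ Finset.Icc 1 n, ∑ l ∈ Finset.Icc 1 n, ∑ j ∈ Finset.Icc 1 n,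
          ∑ k ∈ Finset.Icc 1 n,
          (x ^ ((i : ℤ) - j).natAbs * y ^ ((j : ℤ) - l).natAbs)
            * (x ^ ((i : ℤ) - k).natAbs * y ^ ((k : ℤ) - l).natAbs) := by
          refine Finset.sum_congr rfl fun i _ => Finset.sum_congr rfl fun l _ => ?_
          rw [sq, Finset.sum_mul_sum]
      _ = ∑ i ∈ Finset.Icc 1 n, ∑ l ∈ Finset.Icc 1 n, ∑ j ∈ Finset.Icc 1 n,
          ∑ k ∈ Finset.Icc 1 n,
          (x ^ ((i : ℤ) - j).natAbs * x ^ ((i : ℤ) - k).natAbs)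
            * (y ^ ((j : ℤ) - l).natAbs * y ^ ((k : ℤ) - l).natAbs) := by
          refine Finset.sum_congr rfl fun i _ => Finset.sum_congr rfl fun l _ =>
            Finset.sum_congr rfl fun j _ => Finset.sum_congr rfl fun k _ => by ring
      _ = ∑ j ∈ Finset.Icc 1 n, ∑ k ∈ Finset.Icc 1 n, ∑ i ∈ Finset.Icc 1 n,
          ∑ l ∈ Finset.Icc 1 n,
          (x ^ ((i : ℤ) - j).natAbs * x ^ ((i : ℤ) - k).natAbs)
            * (y ^ ((j : ℤ) - l).natAbs * y ^ ((k : ℤ) - l).natAbs) :=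
          (st3_swapB _ _).trans ((st3_swapA _ _).trans
            ((st3_swapC _ _).trans (st3_swapB _ _)))
      _ = ∑ j ∈ Finset.Icc 1 n, ∑ k ∈ Finset.Icc 1 n,
          (∑ i ∈ Finset.Icc 1 n, x ^ ((i : ℤ) - j).natAbs * x ^ ((i : ℤ) - k).natAbs)
          * (∑ l ∈ Finset.Icc 1 n, y ^ ((j : ℤ) - l).natAbs * y ^ ((k : ℤ) - l).natAbs) := by
          refine Finset.sum_congr rfl fun j _ => Finset.sum_congr rfl fun k _ => ?_
          rw [Finset.sum_mul_sum]
  -- Step 4 : Cauchy–Schwarz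
  have hCS2 : (∑ j ∈ Finset.Icc 1 n, ∑ k ∈ Finset.Icc 1 n,
        (∑ i ∈ Finset.Icc 1 n, x ^ ((i : ℤ) - j).natAbs * x ^ ((i : ℤ) - k).natAbs)
        * (∑ l ∈ Finset.Icc 1 n, y ^ ((j : ℤ) - l).natAbs * y ^ ((k : ℤ) - l).natAbs)) ^ 2
      ≤ (∑ j ∈ Finset.Icc 1 n, ∑ k ∈ Finset.Icc 1 n,
          (∑ i ∈ Finset.Icc 1 n, x ^ ((i : ℤ) - j).natAbs * x ^ ((i : ℤ) - k).natAbs) ^ 2)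
        * ∑ j ∈ Finset.Icc 1 n, ∑ k ∈ Finset.Icc 1 n,
          (∑ l ∈ Finset.Icc 1 n, y ^ ((j : ℤ) - l).natAbs * y ^ ((k : ℤ) - l).natAbs) ^ 2 := by
    have := Finset.sum_mul_sq_le_sq_mul_sq (Finset.Icc 1 n ×ˢ Finset.Icc 1 n)
      (fun p => ∑ i ∈ Finset.Icc 1 n,
        x ^ ((i : ℤ) - p.1).natAbs * x ^ ((i : ℤ) - p.2).natAbs)
      (fun p => ∑ l ∈ Finset.Icc 1 n,
        y ^ ((p.1 : ℤ) - l).natAbs * y ^ ((p.2 : ℤ) - l).natAbs)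
    simpa only [Finset.sum_product] using this
  -- Step 5 : fourth moment bounds
  have hQA : ∑ j ∈ Finset.Icc 1 n, ∑ k ∈ Finset.Icc 1 n,
        (∑ i ∈ Finset.Icc 1 n, x ^ ((i : ℤ) - j).natAbs * x ^ ((i : ℤ) - k).natAbs) ^ 2
      ≤ n * (2 / (1 - x ^ ((4:ℝ)/3))) ^ 3 :=
    st3_fourth' x (x ^ ((4:ℝ)/3)) hx0 hX0 hX1 (st3_amgm x hx0) n
  have hQB : ∑ j ∈ Finset.Icc 1 n, ∑ k ∈ Finset.Icc 1 n,
        (∑ l ∈ Finset.Icc 1 n, y ^ ((j : ℤ) - l).natAbs * y ^ ((k : ℤ) - l).natAbs) ^ 2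
      ≤ n * (2 / (1 - y ^ ((4:ℝ)/3))) ^ 3 := by
    have heq : ∑ j ∈ Finset.Icc 1 n, ∑ k ∈ Finset.Icc 1 n,
        (∑ l ∈ Finset.Icc 1 n, y ^ ((j : ℤ) - l).natAbs * y ^ ((k : ℤ) - l).natAbs) ^ 2
        = ∑ j ∈ Finset.Icc 1 n, ∑ k ∈ Finset.Icc 1 n,
        (∑ l ∈ Finset.Icc 1 n, y ^ ((l : ℤ) - j).natAbs * y ^ ((l : ℤ) - k).natAbs) ^ 2 := by
      refine Finset.sum_congr rfl fun j _ => Finset.sum_congr rfl fun k _ => ?_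
      congr 1
      refine Finset.sum_congr rfl fun l _ => ?_
      rw [show ((j:ℤ) - l).natAbs = ((l:ℤ) - j).natAbs from by omega,
        show ((k:ℤ) - l).natAbs = ((l:ℤ) - k).natAbs from by omega]
    rw [heq]
    exact st3_fourth' y (y ^ ((4:ℝ)/3)) hy0 hY0 hY1 (st3_amgm y hy0) n
  -- Step 6 : numerics
  have hQB0 : (0:ℝ) ≤ ∑ j ∈ Finset.Icc 1 n, ∑ k ∈ Finset.Icc 1 n,
      (∑ l ∈ Finset.Icc 1 n, y ^ ((j : ℤ) - l).natAbs * y ^ ((k : ℤ) - l).natAbs) ^ 2 :=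
    Finset.sum_nonneg fun _ _ => Finset.sum_nonneg fun _ _ => sq_nonneg _
  have hW0 : (0:ℝ) ≤ ∑ j ∈ Finset.Icc 1 n, ∑ k ∈ Finset.Icc 1 n,
      (∑ i ∈ Finset.Icc 1 n, x ^ ((i : ℤ) - j).natAbs * x ^ ((i : ℤ) - k).natAbs)
      * (∑ l ∈ Finset.Icc 1 n, y ^ ((j : ℤ) - l).natAbs * y ^ ((k : ℤ) - l).natAbs) :=
    Finset.sum_nonneg fun j _ => Finset.sum_nonneg fun k _ => mul_nonneg
      (Finset.sum_nonneg fun i _ => mul_nonneg (pow_nonneg hx0 _) (pow_nonneg hx0 _))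
      (Finset.sum_nonneg fun l _ => mul_nonneg (pow_nonneg hy0 _) (pow_nonneg hy0 _))
  have h4D0 : (0:ℝ) ≤ 4 / ((1 - x ^ ((4:ℝ)/3)) * (1 - y ^ ((4:ℝ)/3))) := by positivity
  have hR0 : (0:ℝ) ≤ (4 / ((1 - x ^ ((4:ℝ)/3)) * (1 - y ^ ((4:ℝ)/3)))) ^ ((3:ℝ)/2) * n :=
    mul_nonneg (Real.rpow_nonneg h4D0 _) (Nat.cast_nonneg n)
  have hR2 : ((4 / ((1 - x ^ ((4:ℝ)/3)) * (1 - y ^ ((4:ℝ)/3)))) ^ ((3:ℝ)/2) * (n:ℝ)) ^ 2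
      = (4 / ((1 - x ^ ((4:ℝ)/3)) * (1 - y ^ ((4:ℝ)/3)))) ^ (3:ℕ) * (n:ℝ) ^ 2 := by
    rw [mul_pow]
    congr 1
    rw [← Real.rpow_natCast
      ((4 / ((1 - x ^ ((4:ℝ)/3)) * (1 - y ^ ((4:ℝ)/3)))) ^ ((3:ℝ)/2)) 2,
      ← Real.rpow_mul h4D0,
      show (3:ℝ)/2 * ((2:ℕ):ℝ) = ((3:ℕ):ℝ) from by push_cast; ring,
      Real.rpow_natCast]
  have hprod : (n * (2 / (1 - x ^ ((4:ℝ)/3))) ^ 3) * (n * (2 / (1 - y ^ ((4:ℝ)/3))) ^ 3)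
      = (4 / ((1 - x ^ ((4:ℝ)/3)) * (1 - y ^ ((4:ℝ)/3)))) ^ (3:ℕ) * (n:ℝ) ^ 2 := by
    field_simp
    ring
  have hWsq : (∑ j ∈ Finset.Icc 1 n, ∑ k ∈ Finset.Icc 1 n,
        (∑ i ∈ Finset.Icc 1 n, x ^ ((i : ℤ) - j).natAbs * x ^ ((i : ℤ) - k).natAbs)
        * (∑ l ∈ Finset.Icc 1 n, y ^ ((j : ℤ) - l).natAbs * y ^ ((k : ℤ) - l).natAbs)) ^ 2
      ≤ ((4 / ((1 - x ^ ((4:ℝ)/3)) * (1 - y ^ ((4:ℝ)/3)))) ^ ((3:ℝ)/2) * (n:ℝ)) ^ 2 := by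
    rw [hR2, ← hprod]
    exact hCS2.trans (mul_le_mul hQA hQB hQB0 (by positivity))
  have hfin : ∑ j ∈ Finset.Icc 1 n, ∑ k ∈ Finset.Icc 1 n,
        (∑ i ∈ Finset.Icc 1 n, x ^ ((i : ℤ) - j).natAbs * x ^ ((i : ℤ) - k).natAbs)
        * (∑ l ∈ Finset.Icc 1 n, y ^ ((j : ℤ) - l).natAbs * y ^ ((k : ℤ) - l).natAbs)
      ≤ (4 / ((1 - x ^ ((4:ℝ)/3)) * (1 - y ^ ((4:ℝ)/3)))) ^ ((3:ℝ)/2) * n := by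
    calc _ = Real.sqrt ((∑ j ∈ Finset.Icc 1 n, ∑ k ∈ Finset.Icc 1 n,
            (∑ i ∈ Finset.Icc 1 n, x ^ ((i : ℤ) - j).natAbs * x ^ ((i : ℤ) - k).natAbs)
            * (∑ l ∈ Finset.Icc 1 n,
              y ^ ((j : ℤ) - l).natAbs * y ^ ((k : ℤ) - l).natAbs)) ^ 2) :=
          (Real.sqrt_sq hW0).symm
      _ ≤ Real.sqrt (((4 / ((1 - x ^ ((4:ℝ)/3)) * (1 - y ^ ((4:ℝ)/3)))) ^ ((3:ℝ)/2)
            * (n:ℝ)) ^ 2) := Real.sqrt_le_sqrt hWsq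
      _ = _ := Real.sqrt_sq hR0
  rw [hSM]
  exact ((hCS1.trans (le_of_eq hW)).trans hfin)
end

section
/- Let X, Y, N be real random variables on a common probability space with P(Y > 0) = 1 and N standard normal. For every ε > 0, the Kolmogorov distance satisfies d_Kol(X/Y, N) ≤ d_Kol(X, N) + P(|Y - 1| > ε) + ε. -/
open MeasureTheory ProbabilityTheory

section Helpers
open Real Set

lemma pdf_anti {t x : ℝ} (h : |t| ≤ |x|) :
    gaussianPDFReal 0 1 x ≤ gaussianPDFReal 0 1 t := by
  simp only [gaussianPDFReal, sub_zero, NNReal.coe_one, mul_one]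
  have hsq : t^2 ≤ x^2 := by
    rw [← sq_abs t, ← sq_abs x]; exact pow_le_pow_left₀ (abs_nonneg t) h 2
  exact mul_le_mul_of_nonneg_left (Real.exp_le_exp.2 (by linarith)) (by positivity)

lemma pdf_neg (x : ℝ) : gaussianPDFReal 0 1 (-x) = gaussianPDFReal 0 1 x := by
  simp [gaussianPDFReal, neg_sq]

lemma key {u c : ℝ} (hu : 0 ≤ u) (hc : 1/4 ≤ c) :
    u * gaussianPDFReal 0 1 (c * u) ≤ 1 := by
  have hc0 : 0 < c := by linarith
  set t := c * u with ht
  have ht0 : 0 ≤ t := by positivity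
  have hA : t * rexp (-t^2/2) ≤ rexp (-(1:ℝ)/2) := by
    have h1 : t ≤ rexp ((t^2-1)/2) := by
      nlinarith [Real.add_one_le_exp ((t^2-1)/2), sq_nonneg (t-1)]
    calc t * rexp (-t^2/2) ≤ rexp ((t^2-1)/2) * rexp (-t^2/2) :=
          mul_le_mul_of_nonneg_right h1 (Real.exp_nonneg _)
      _ = rexp (-(1:ℝ)/2) := by rw [← Real.exp_add]; ring_nf
  have hB : 4 * rexp (-(1:ℝ)/2) ≤ Real.sqrt (2 * π) := by
    have hπ : 3.141592 < π := Real.pi_gt_d6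
    have he : (2.7182818283 : ℝ) < Real.exp 1 := Real.exp_one_gt_d9
    have hsq : Real.sqrt (2*π) ^ 2 = 2 * π := Real.sq_sqrt (by positivity)
    have hs0 : 0 ≤ Real.sqrt (2*π) := Real.sqrt_nonneg _
    have hee : rexp (-(1:ℝ)/2) * rexp (-(1:ℝ)/2) = rexp (-1) := by
      rw [← Real.exp_add]; norm_num
    have hinv : rexp (-1) = (Real.exp 1)⁻¹ := by
      rw [← Real.exp_neg]
    have hexp0 : (0:ℝ) < rexp (-(1:ℝ)/2) := Real.exp_pos _
    have h16 : 16 * rexp (-1) < 2 * π := by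
      rw [hinv]
      have h1 : rexp 1 * (rexp 1)⁻¹ = 1 := mul_inv_cancel₀ (ne_of_gt (Real.exp_pos 1))
      have hi0 : (0:ℝ) < (rexp 1)⁻¹ := by positivity
      nlinarith
    nlinarith [sq_nonneg (Real.sqrt (2*π) - 4 * rexp (-(1:ℝ)/2))]
  have hEq : gaussianPDFReal 0 1 t = (Real.sqrt (2*π))⁻¹ * rexp (-t^2/2) := by
    simp [gaussianPDFReal]
  rw [hEq]
  have hut : u * rexp (-t^2/2) ≤ 4 * rexp (-(1:ℝ)/2) := by
    have h4 : u ≤ 4 * t := by nlinarith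
    nlinarith [Real.exp_nonneg (-t^2/2), Real.exp_pos (-t^2/2)]
  have hs1 : 0 < Real.sqrt (2*π) := Real.sqrt_pos.2 (by positivity)
  rw [mul_comm (Real.sqrt (2*π))⁻¹ _, ← mul_assoc]
  rw [← div_eq_mul_inv, div_le_one hs1]
  linarith

lemma gauss_Ioc_le {a b t : ℝ} (hab : a ≤ b) (ht : ∀ x ∈ Set.Ioc a b, |t| ≤ |x|) :
    ((gaussianReal 0 1) (Set.Ioc a b)).toReal ≤ (b - a) * gaussianPDFReal 0 1 t := by
  rw [gaussianReal_apply 0 one_ne_zero]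
  have hle : ∫⁻ x in Set.Ioc a b, gaussianPDF 0 1 x
      ≤ ∫⁻ _ in Set.Ioc a b, ENNReal.ofReal (gaussianPDFReal 0 1 t) :=
    setLIntegral_mono measurable_const (fun x hx => ENNReal.ofReal_le_ofReal (pdf_anti (ht x hx)))
  have hconst : ∫⁻ _ in Set.Ioc a b, ENNReal.ofReal (gaussianPDFReal 0 1 t)
      = ENNReal.ofReal ((b - a) * gaussianPDFReal 0 1 t) := by
    rw [setLIntegral_const, Real.volume_Ioc, ← ENNReal.ofReal_mul (gaussianPDFReal_nonneg 0 1 t),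
      mul_comm]
  calc (∫⁻ x in Set.Ioc a b, gaussianPDF 0 1 x).toReal
      ≤ (ENNReal.ofReal ((b - a) * gaussianPDFReal 0 1 t)).toReal := by
        apply ENNReal.toReal_mono ENNReal.ofReal_ne_top (hconst ▸ hle)
    _ = (b - a) * gaussianPDFReal 0 1 t := ENNReal.toReal_ofReal
          (mul_nonneg (sub_nonneg.2 hab) (gaussianPDFReal_nonneg 0 1 t))

lemma gauss_Iic_zero : ((gaussianReal 0 1) (Set.Iic (0:ℝ))).toReal = 1/2 ∧
    ((gaussianReal 0 1) (Set.Ioi (0:ℝ))).toReal = 1/2 := by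
  set m := gaussianReal 0 1 with hm
  have hmap : m.map (fun x => (-1:ℝ) * x) = m := by
    rw [hm, gaussianReal_map_const_mul]
    norm_num
  have h1 : m (Set.Iic 0) = m (Set.Ici 0) := by
    calc m (Set.Iic 0) = (m.map (fun x => (-1:ℝ) * x)) (Set.Iic 0) := by rw [hmap]
      _ = m ((fun x => (-1:ℝ) * x) ⁻¹' (Set.Iic 0)) :=
          Measure.map_apply (by fun_prop) measurableSet_Iic
      _ = m (Set.Ici 0) := by
          congr 1
          ext x
          simp
  have h2 : m {(0:ℝ)} = 0 :=
    gaussianReal_absolutelyContinuous 0 one_ne_zero Real.volume_singleton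
  have h3 : m (Set.Ici 0) = m (Set.Ioi 0) := by
    have he : (Set.Ici (0:ℝ)) = Set.Ioi 0 ∪ {0} := (Set.Ioi_union_left).symm
    have hd : Disjoint (Set.Ioi (0:ℝ)) {0} := by simp
    rw [he, measure_union hd (measurableSet_singleton 0), h2, add_zero]
  have h4 : m (Set.Iic 0) + m (Set.Ioi 0) = 1 := by
    have hc : Set.Ioi (0:ℝ) = (Set.Iic 0)ᶜ := by ext x; simp
    rw [hc, measure_add_measure_compl measurableSet_Iic, measure_univ]
  have hfin : m (Set.Iic 0) ≠ ⊤ := measure_ne_top _ _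
  have hfin2 : m (Set.Ioi 0) ≠ ⊤ := measure_ne_top _ _
  have h5 : (m (Set.Iic 0)).toReal + (m (Set.Ioi 0)).toReal = 1 := by
    rw [← ENNReal.toReal_add hfin hfin2, h4]; simp
  have h6 : (m (Set.Iic 0)).toReal = (m (Set.Ioi 0)).toReal := by rw [h1, h3]
  constructor <;> linarith

lemma Fdiff {a b : ℝ} (hab : a ≤ b) :
    ((gaussianReal 0 1) (Set.Iic b)).toReal - ((gaussianReal 0 1) (Set.Iic a)).toReal
      = ((gaussianReal 0 1) (Set.Ioc a b)).toReal := by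
  have hu : Set.Iic a ∪ Set.Ioc a b = Set.Iic b := Set.Iic_union_Ioc_eq_Iic hab
  have hd : Disjoint (Set.Iic a) (Set.Ioc a b) := Set.Iic_disjoint_Ioc le_rfl
  have hm := measure_union (μ := gaussianReal 0 1) hd measurableSet_Ioc
  rw [hu] at hm
  rw [hm, ENNReal.toReal_add (measure_ne_top _ _) (measure_ne_top _ _)]
  ring

lemma conc_plus {ε : ℝ} (hε : 0 < ε) (hε1 : ε < 1) (z : ℝ) :
    ((gaussianReal 0 1) (Set.Iic (z + |z| * ε))).toReal
      ≤ ((gaussianReal 0 1) (Set.Iic z)).toReal + ε := by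
  have hab : z ≤ z + |z| * ε := by nlinarith [abs_nonneg z]
  have hdiff := Fdiff hab
  suffices h : ((gaussianReal 0 1) (Set.Ioc z (z + |z| * ε))).toReal ≤ ε by linarith
  rcases le_or_gt 0 z with hz | hz
  · have ht : ∀ x ∈ Set.Ioc z (z + |z| * ε), |z| ≤ |x| := by
      intro x hx
      rw [abs_of_nonneg hz, abs_of_nonneg (by linarith [hx.1] : (0:ℝ) ≤ x)]
      exact hx.1.le
    calc ((gaussianReal 0 1) (Set.Ioc z (z + |z| * ε))).toReal
        ≤ (z + |z| * ε - z) * gaussianPDFReal 0 1 z := gauss_Ioc_le hab ht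
      _ = ε * (z * gaussianPDFReal 0 1 (1 * z)) := by
          rw [abs_of_nonneg hz, one_mul]; ring
      _ ≤ ε * 1 := by
          exact mul_le_mul_of_nonneg_left (key hz (by norm_num)) hε.le
      _ = ε := mul_one ε
  · have hzabs : |z| = -z := abs_of_neg hz
    have hb0 : z + |z| * ε ≤ 0 := by rw [hzabs]; nlinarith
    rcases le_or_gt ε (3/4) with hε34 | hε34
    · have ht : ∀ x ∈ Set.Ioc z (z + |z| * ε), |z + |z| * ε| ≤ |x| := by
        intro x hx
        rw [abs_of_nonpos hb0, abs_of_nonpos (le_trans hx.2 hb0)]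
        linarith [hx.2]
      have hpdf : gaussianPDFReal 0 1 (z + |z| * ε) = gaussianPDFReal 0 1 ((1 - ε) * |z|) := by
        rw [← pdf_neg ((1 - ε) * |z|)]
        congr 1
        rw [hzabs]; ring
      calc ((gaussianReal 0 1) (Set.Ioc z (z + |z| * ε))).toReal
          ≤ (z + |z| * ε - z) * gaussianPDFReal 0 1 (z + |z| * ε) := gauss_Ioc_le hab ht
        _ = ε * (|z| * gaussianPDFReal 0 1 ((1 - ε) * |z|)) := by rw [hpdf]; ring
        _ ≤ ε * 1 := mul_le_mul_of_nonneg_left (key (abs_nonneg z) (by linarith)) hε.le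
        _ = ε := mul_one ε
    · have hsub : Set.Ioc z (z + |z| * ε) ⊆ Set.Iic 0 := fun x hx => le_trans hx.2 hb0
      calc ((gaussianReal 0 1) (Set.Ioc z (z + |z| * ε))).toReal
          ≤ ((gaussianReal 0 1) (Set.Iic (0:ℝ))).toReal :=
            ENNReal.toReal_mono (measure_ne_top _ _) (measure_mono hsub)
        _ = 1/2 := gauss_Iic_zero.1
        _ ≤ ε := by linarith

lemma conc_minus {ε : ℝ} (hε : 0 < ε) (hε1 : ε < 1) (z : ℝ) :
    ((gaussianReal 0 1) (Set.Iic z)).toReal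
      ≤ ((gaussianReal 0 1) (Set.Iic (z - |z| * ε))).toReal + ε := by
  have hab : z - |z| * ε ≤ z := by nlinarith [abs_nonneg z]
  have hdiff := Fdiff hab
  suffices h : ((gaussianReal 0 1) (Set.Ioc (z - |z| * ε) z)).toReal ≤ ε by linarith
  rcases le_or_gt z 0 with hz | hz
  · have hzabs : |z| = -z := abs_of_nonpos hz
    have ht : ∀ x ∈ Set.Ioc (z - |z| * ε) z, |z| ≤ |x| := by
      intro x hx
      rw [hzabs, abs_of_nonpos (le_trans hx.2 hz)]
      linarith [hx.2]
    have hpdf : gaussianPDFReal 0 1 z = gaussianPDFReal 0 1 (1 * |z|) := by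
      rw [one_mul, ← pdf_neg |z|, hzabs, neg_neg]
    calc ((gaussianReal 0 1) (Set.Ioc (z - |z| * ε) z)).toReal
        ≤ (z - (z - |z| * ε)) * gaussianPDFReal 0 1 z := gauss_Ioc_le hab ht
      _ = ε * (|z| * gaussianPDFReal 0 1 (1 * |z|)) := by rw [hpdf]; ring
      _ ≤ ε * 1 := mul_le_mul_of_nonneg_left (key (abs_nonneg z) (by norm_num)) hε.le
      _ = ε := mul_one ε
  · have hzabs : |z| = z := abs_of_pos hz
    have ha0 : 0 ≤ z - |z| * ε := by rw [hzabs]; nlinarith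
    rcases le_or_gt ε (3/4) with hε34 | hε34
    · have ht : ∀ x ∈ Set.Ioc (z - |z| * ε) z, |z - |z| * ε| ≤ |x| := by
        intro x hx
        rw [abs_of_nonneg ha0, abs_of_nonneg (le_trans ha0 hx.1.le)]
        exact hx.1.le
      have hpdf : gaussianPDFReal 0 1 (z - |z| * ε) = gaussianPDFReal 0 1 ((1 - ε) * z) := by
        congr 1; rw [hzabs]; ring
      calc ((gaussianReal 0 1) (Set.Ioc (z - |z| * ε) z)).toReal
          ≤ (z - (z - |z| * ε)) * gaussianPDFReal 0 1 (z - |z| * ε) := gauss_Ioc_le hab ht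
        _ = ε * (z * gaussianPDFReal 0 1 ((1 - ε) * z)) := by rw [hpdf, hzabs]; ring
        _ ≤ ε * 1 := mul_le_mul_of_nonneg_left (key hz.le (by linarith)) hε.le
        _ = ε := mul_one ε
    · have hsub : Set.Ioc (z - |z| * ε) z ⊆ Set.Ioi 0 := fun x hx => lt_of_le_of_lt ha0 hx.1
      calc ((gaussianReal 0 1) (Set.Ioc (z - |z| * ε) z)).toReal
          ≤ ((gaussianReal 0 1) (Set.Ioi (0:ℝ))).toReal :=
            ENNReal.toReal_mono (measure_ne_top _ _) (measure_mono hsub)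
        _ = 1/2 := gauss_Iic_zero.2
        _ ≤ ε := by linarith
end Helpers

/-- Kolmogorov distance between the laws of two real random variables. -/
noncomputable def dKol {Ω : Type*} [MeasurableSpace Ω] (μ : Measure Ω) (U V : Ω → ℝ) : ℝ :=
  ⨆ z : ℝ, |(μ {ω | U ω ≤ z}).toReal - (μ {ω | V ω ≤ z}).toReal|

theorem stmt5 {Ω : Type*} [MeasurableSpace Ω] (μ : Measure Ω) [IsProbabilityMeasure μ]
    (X Y N : Ω → ℝ) (hX : Measurable X) (hY : Measurable Y) (hN : Measurable N)
    (hNlaw : μ.map N = gaussianReal 0 1)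
    (hYpos : μ {ω | 0 < Y ω} = 1)
    (ε : ℝ) (hε : 0 < ε) :
    dKol μ (fun ω => X ω / Y ω) N
      ≤ dKol μ X N + (μ {ω | ε < |Y ω - 1|}).toReal + ε := by
  have hp0 : 0 ≤ (μ {ω | ε < |Y ω - 1|}).toReal := ENNReal.toReal_nonneg
  have hd0 : 0 ≤ dKol μ X N := Real.iSup_nonneg fun z => abs_nonneg _
  have hone : ∀ s : Set Ω, (μ s).toReal ≤ 1 := by
    intro s
    have h := ENNReal.toReal_mono (measure_ne_top μ Set.univ) (measure_mono (Set.subset_univ s))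
    rwa [measure_univ, ENNReal.toReal_one] at h
  have habs1 : ∀ (U V : Ω → ℝ) (z : ℝ),
      |(μ {ω | U ω ≤ z}).toReal - (μ {ω | V ω ≤ z}).toReal| ≤ 1 := by
    intro U V z
    have hA := hone {ω | U ω ≤ z}
    have hB := hone {ω | V ω ≤ z}
    have hA0 : (0:ℝ) ≤ (μ {ω | U ω ≤ z}).toReal := ENNReal.toReal_nonneg
    have hB0 : (0:ℝ) ≤ (μ {ω | V ω ≤ z}).toReal := ENNReal.toReal_nonneg
    rw [abs_le]; constructor <;> linarith
  rcases le_or_gt 1 ε with hε1 | hε1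
  · have hle1 : dKol μ (fun ω => X ω / Y ω) N ≤ 1 := by
      unfold dKol
      exact Real.iSup_le (fun z => habs1 _ _ z) zero_le_one
    linarith
  -- main case : ε < 1
  have hBdd : BddAbove (Set.range fun z : ℝ =>
      |(μ {ω | X ω ≤ z}).toReal - (μ {ω | N ω ≤ z}).toReal|) := by
    refine ⟨1, ?_⟩
    rintro _ ⟨z, rfl⟩
    exact habs1 X N z
  have hdle : ∀ w : ℝ,
      |(μ {ω | X ω ≤ w}).toReal - (μ {ω | N ω ≤ w}).toReal| ≤ dKol μ X N :=
    fun w => le_ciSup hBdd w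
  have hNz : ∀ w : ℝ, (μ {ω | N ω ≤ w}) = (gaussianReal 0 1) (Set.Iic w) := by
    intro w
    rw [← hNlaw, Measure.map_apply hN measurableSet_Iic]
    rfl
  have hV : μ {ω | ¬ 0 < Y ω} = 0 := by
    have hms : MeasurableSet {ω | 0 < Y ω} := hY measurableSet_Ioi
    have hc : {ω | ¬ 0 < Y ω} = {ω | 0 < Y ω}ᶜ := rfl
    rw [hc, measure_compl hms (measure_ne_top _ _), hYpos, measure_univ, tsub_self]
  have toReal_le : ∀ {S T U : Set Ω}, S ⊆ T ∪ U ∪ {ω | ¬ 0 < Y ω} →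
      (μ S).toReal ≤ (μ T).toReal + (μ U).toReal := by
    intro S T U hsub
    have h1 : μ S ≤ μ T + μ U := by
      calc μ S ≤ μ (T ∪ U ∪ {ω | ¬ 0 < Y ω}) := measure_mono hsub
        _ ≤ μ (T ∪ U) + μ {ω | ¬ 0 < Y ω} := measure_union_le _ _
        _ = μ (T ∪ U) := by rw [hV, add_zero]
        _ ≤ μ T + μ U := measure_union_le _ _
    calc (μ S).toReal ≤ (μ T + μ U).toReal :=
          ENNReal.toReal_mono
            (ENNReal.add_ne_top.mpr ⟨measure_ne_top _ _, measure_ne_top _ _⟩) h1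
      _ = (μ T).toReal + (μ U).toReal :=
          ENNReal.toReal_add (measure_ne_top _ _) (measure_ne_top _ _)
  set D := dKol μ X N with hD
  have key3 : ∀ z : ℝ, |(μ {ω | X ω / Y ω ≤ z}).toReal - (μ {ω | N ω ≤ z}).toReal|
      ≤ D + (μ {ω | ε < |Y ω - 1|}).toReal + ε := by
    intro z
    have h1 : (μ {ω | X ω / Y ω ≤ z}).toReal
        ≤ (μ {ω | X ω ≤ z + |z| * ε}).toReal + (μ {ω | ε < |Y ω - 1|}).toReal := by
      apply toReal_le
      intro ω hω
      simp only [Set.mem_setOf_eq, Set.mem_union] at *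
      by_cases hYω : 0 < Y ω
      · by_cases hAbs : ε < |Y ω - 1|
        · exact Or.inl (Or.inr hAbs)
        · refine Or.inl (Or.inl ?_)
          push_neg at hAbs
          have hXle : X ω ≤ z * Y ω := (div_le_iff₀ hYω).mp hω
          have habs : |z * (Y ω - 1)| ≤ |z| * ε := by
            rw [abs_mul]; exact mul_le_mul_of_nonneg_left hAbs (abs_nonneg z)
          nlinarith [le_abs_self (z * (Y ω - 1))]
      · exact Or.inr hYω
    have h2 : (μ {ω | X ω ≤ z - |z| * ε}).toReal
        ≤ (μ {ω | X ω / Y ω ≤ z}).toReal + (μ {ω | ε < |Y ω - 1|}).toReal := by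
      apply toReal_le
      intro ω hω
      simp only [Set.mem_setOf_eq, Set.mem_union] at *
      by_cases hYω : 0 < Y ω
      · by_cases hAbs : ε < |Y ω - 1|
        · exact Or.inl (Or.inr hAbs)
        · refine Or.inl (Or.inl ?_)
          push_neg at hAbs
          rw [div_le_iff₀ hYω]
          have habs : |z * (Y ω - 1)| ≤ |z| * ε := by
            rw [abs_mul]; exact mul_le_mul_of_nonneg_left hAbs (abs_nonneg z)
          nlinarith [neg_abs_le (z * (Y ω - 1))]
      · exact Or.inr hYω
    have hg1 := conc_plus hε hε1 z
    have hg2 := conc_minus hε hε1 z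
    have hd1 := abs_le.mp (hdle (z + |z| * ε))
    have hd2 := abs_le.mp (hdle (z - |z| * ε))
    rw [hNz] at hd1 hd2
    rw [hNz z, abs_le]
    constructor
    · linarith [hd2.1, hg2, h2]
    · linarith [hd1.2, hg1, h1]
  calc dKol μ (fun ω => X ω / Y ω) N
      = ⨆ z : ℝ, |(μ {ω | X ω / Y ω ≤ z}).toReal - (μ {ω | N ω ≤ z}).toReal| := rfl
    _ ≤ D + (μ {ω | ε < |Y ω - 1|}).toReal + ε := Real.iSup_le key3 (by linarith)
end

section
/- Let |α| < 1 and n ≥ 2, and let λ₁ ≥ λ₂ ≥ … ≥ λ_{n-1} > 0 be the nonzero eigenvalues of the positive semidefinite matrix K_n with entries K_n(j,k) = (1/n)·(α^{|k-j|} − α^{k+j})/(1−α²) − (1/n²)·(1−α^k)(1−α^j)/(1−α)². Then the product λ₁λ₂⋯λ_{n-1} equals n^{-(n-1)}·(1 + α²(n−1)/n − 2α(n−1)/n). -/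
/-!
Let `L` be the lower triangular matrix `(α ^ (j - i))_{i ≤ j}`, whose inverse is the bidiagonal
first-difference matrix `D`, and let `P = 1 - J / n` be the centering projection. Summing the
geometric series in the entries gives `K_n = L (P / n) Lᵀ`. Since `det L = 1`,
`det (X - K_n) = det (X • D Dᵀ - P / n)`, and conjugating by the basis `𝟙, e₁ - e₀, …` turns `P`
into `diag (0, 1, …, 1)`. Row `0` of the constant part then vanishes, so the coefficient of `X` is
`(-1/n) ^ (n-1)` times the `(0, 0)` entry of the conjugated `D Dᵀ`, which is
`𝟙ᵀ D Dᵀ 𝟙 / n = ((n - 1) (1 - α)² + 1) / n`. Up to sign, that coefficient of the characteristic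
polynomial is the coefficient of `t ^ (n-1)` in `det (1 - t K_n) = ∏ (1 - λₖ t)`.
-/

open Polynomial Matrix Finset

namespace Matrix

variable {R : Type*} [CommRing R] {ι : Type*} [Fintype ι]

theorem sum_sum_mul_transpose_apply (N : Matrix ι ι R) :
    ∑ i, ∑ j, (N * Nᵀ) i j = ∑ k, (∑ i, N i k) ^ 2 := by
  simp only [mul_apply, transpose_apply, sq, sum_mul_sum]
  symm
  rw [sum_comm]
  exact sum_congr rfl fun i _ => sum_comm

theorem mul_ones_mul_transpose_apply (M : Matrix ι ι R) (j k : ι) :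
    (M * (of fun _ _ => 1 : Matrix ι ι R) * Mᵀ) j k = (∑ i, M j i) * ∑ i, M k i := by
  simp [mul_apply, sum_mul, mul_sum]

variable [DecidableEq ι]

theorem det_map_C (M : Matrix ι ι R) : (M.map C).det = C M.det :=
  (RingHom.map_det C M).symm

theorem coeff_one_det_X_smul_sub_of_row_eq_zero (A B : Matrix ι ι R) (i : ι) (hB : B i = 0) :
    (det ((X : R[X]) • A.map C - B.map C)).coeff 1 = det ((-B).updateRow i (A i)) := by
  -- row `i` is `X • A i`, so `X` factors out of the determinant
  have hrow : (X : R[X]) • A.map C - B.map C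
      = ((X : R[X]) • A.map C - B.map C).updateRow i ((X : R[X]) • (A.map C) i) := by
    ext j k
    by_cases hj : j = i
    · subst hj; simp [hB]
    · simp [hj]
  rw [hrow, det_updateRow_smul, coeff_X_mul, coeff_zero_eq_eval_zero, ← coe_evalRingHom,
    RingHom.map_det]
  congr 1
  ext j k
  by_cases hj : j = i <;> simp [hj]

theorem det_updateRow_zero_diagonal {m : ℕ} (d r : Fin (m + 1) → R) :
    det ((diagonal d).updateRow 0 r) = r 0 * ∏ i : Fin m, d i.succ := by
  rw [det_of_isUpperTriangular, Fin.prod_univ_succ]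
  · simp
  · intro i j hji
    have hi : i ≠ 0 := by rintro rfl; exact Fin.not_lt_zero _ hji
    rw [updateRow_ne hi]
    exact diagonal_apply_ne d (ne_of_lt hji).symm

theorem charpoly_coeff_one_of_det_one_sub_smul_eq_prod {κ : Type*} [Fintype κ] [IsDomain R]
    [Infinite R] (K : Matrix ι ι R) (lam : κ → R) (hcard : Fintype.card ι = Fintype.card κ + 1)
    (h : ∀ t : R, det (1 - t • K) = ∏ k, (1 - lam k * t)) :
    K.charpoly.coeff 1 = (-1) ^ Fintype.card κ * ∏ k, lam k := by
  have hrev : K.charpolyRev = ∏ k, (1 - C (lam k) * X) := by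
    refine Polynomial.funext fun t => ?_
    rw [charpolyRev, ← coe_evalRingHom, RingHom.map_det, map_prod]
    convert h t using 2
    · rw [map_sub, map_one]
      congr 1
      ext i j
      simp only [RingHom.mapMatrix_apply, coe_evalRingHom, map_apply, Matrix.smul_apply,
        smul_eq_mul, eval_mul, eval_X, eval_C]
    · simp only [coe_evalRingHom, eval_sub, eval_one, eval_mul, eval_C, eval_X]
  have hdeg : ∀ k ∈ univ, (1 - C (lam k) * X).natDegree ≤ 1 := fun k _ => by
    compute_degree!
  have htop := coeff_prod_of_natDegree_le (s := univ) _ 1 hdeg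
  rw [card_univ, mul_one, ← hrev, ← reverse_charpoly, coeff_reverse,
    charpoly_natDegree_eq_dim, hcard, revAt_le (by omega), Nat.add_sub_cancel_left] at htop
  rw [htop, ← card_univ, ← prod_neg]
  refine prod_congr rfl fun k _ => ?_
  simp [coeff_one]

theorem charpoly_mul_mul_transpose {M N : Matrix ι ι R} (hMN : M * N = 1) (hM : M.det = 1)
    (B : Matrix ι ι R) :
    (M * B * Mᵀ).charpoly = det ((X : R[X]) • (N * Nᵀ).map C - B.map C) := by
  have hgram : M * (N * Nᵀ) * Mᵀ = 1 := by
    rw [← Matrix.mul_assoc, hMN, Matrix.one_mul, ← transpose_mul, hMN, transpose_one]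
  have hchar : charmatrix (M * B * Mᵀ)
      = M.map C * ((X : R[X]) • (N * Nᵀ).map C - B.map C) * Mᵀ.map C := by
    rw [Matrix.mul_sub, Matrix.sub_mul, Matrix.mul_smul, Matrix.smul_mul, ← Matrix.map_mul,
      ← Matrix.map_mul, ← Matrix.map_mul, ← Matrix.map_mul, hgram, charmatrix, scalar_apply,
      ← smul_one_eq_diagonal, Matrix.map_one _ (map_zero C) (map_one C)]
    rfl
  rw [charpoly, hchar, det_mul, det_mul, det_map_C, det_map_C, det_transpose, hM, map_one,
    one_mul, mul_one]

theorem det_X_smul_sub_conj {H G : Matrix ι ι R} (hHG : H * G = 1) (A B : Matrix ι ι R) :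
    det ((X : R[X]) • A.map C - B.map C)
      = det ((X : R[X]) • (H * A * G).map C - (H * B * G).map C) := by
  have hconj : (X : R[X]) • (H * A * G).map C - (H * B * G).map C
      = H.map C * ((X : R[X]) • A.map C - B.map C) * G.map C := by
    rw [Matrix.mul_sub, Matrix.sub_mul, Matrix.mul_smul, Matrix.smul_mul, ← Matrix.map_mul,
      ← Matrix.map_mul, ← Matrix.map_mul, ← Matrix.map_mul]
  rw [hconj, det_mul, det_mul, det_map_C, det_map_C, mul_comm, ← mul_assoc, ← map_mul,
    ← det_mul, mul_eq_one_comm.1 hHG, det_one, map_one, one_mul]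

end Matrix

namespace CenteredAR

variable {R : Type*} [CommRing R]

theorem sum_ite_val_eq {n : ℕ} (a : ℕ) (c : R) :
    ∑ i : Fin n, (if (i : ℕ) = a then c else 0) = if a < n then c else 0 := by
  rw [Fin.sum_univ_eq_sum_range (fun i => if i = a then c else 0), sum_ite_eq']
  simp only [mem_range]

theorem sum_ite_le_pow (x : R) {n j : ℕ} (hj : j < n) :
    ∑ i : Fin n, (if (i : ℕ) ≤ j then x ^ (j - i) else 0) = ∑ i ∈ range (j + 1), x ^ i := by
  have hfilter : (range n).filter (· ≤ j) = range (j + 1) := by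
    ext i; simp only [mem_filter, mem_range]; omega
  rw [Fin.sum_univ_eq_sum_range (fun i => if i ≤ j then x ^ (j - i) else 0), ← sum_filter,
    hfilter, ← sum_range_reflect]
  refine sum_congr rfl fun i hi => ?_
  rw [mem_range] at hi
  congr 1
  omega

def lowerPowers (α : R) (n : ℕ) : Matrix (Fin n) (Fin n) R :=
  of fun j i => if i ≤ j then α ^ ((j : ℕ) - i) else 0

def firstDifference (α : R) (n : ℕ) : Matrix (Fin n) (Fin n) R :=
  of fun i k => if i = k then 1 else if (i : ℕ) = k + 1 then -α else 0

theorem lowerPowers_mul_firstDifference (α : R) (n : ℕ) :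
    lowerPowers α n * firstDifference α n = 1 := by
  ext j k
  have hterm : ∀ i : Fin n, lowerPowers α n j i * firstDifference α n i k
      = (if (i : ℕ) = k then (if (k : ℕ) ≤ j then α ^ ((j : ℕ) - k) else 0) else 0)
        + (if (i : ℕ) = k + 1 then -α * (if (k : ℕ) + 1 ≤ j then α ^ ((j : ℕ) - (k + 1)) else 0)
            else 0) := by
    intro i
    simp only [lowerPowers, firstDifference, of_apply, Fin.ext_iff, Fin.le_def]
    split_ifs <;> first | omega | (simp_all <;> ring)
  rw [mul_apply, sum_congr rfl fun i _ => hterm i, sum_add_distrib, sum_ite_val_eq,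
    sum_ite_val_eq, if_pos k.isLt, one_apply]
  simp only [Fin.ext_iff]
  split_ifs <;> try omega
  all_goals first
    | (simp_all; done)
    | (rw [show (j : ℕ) - k = (j - (k + 1)) + 1 by omega, pow_succ]; ring)

theorem sum_firstDifference_apply (α : R) {n : ℕ} (k : Fin n) :
    ∑ i, firstDifference α n i k = if (k : ℕ) + 1 < n then 1 - α else 1 := by
  have hcol : ∀ i : Fin n, firstDifference α n i k
      = (if (i : ℕ) = k then 1 else 0) + if (i : ℕ) = k + 1 then -α else 0 := by
    intro i
    simp only [firstDifference, of_apply, Fin.ext_iff]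
    split_ifs <;> first | omega | simp
  rw [sum_congr rfl fun i _ => hcol i, sum_add_distrib, sum_ite_val_eq, sum_ite_val_eq,
    if_pos k.isLt]
  split_ifs <;> ring

theorem sum_sum_firstDifference_mul_transpose (α : R) (m : ℕ) :
    ∑ i, ∑ j, (firstDifference α (m + 1) * (firstDifference α (m + 1))ᵀ) i j
      = m * (1 - α) ^ 2 + 1 := by
  rw [sum_sum_mul_transpose_apply, Fin.sum_univ_castSucc]
  simp [sum_firstDifference_apply]

theorem det_lowerPowers (α : R) (n : ℕ) : (lowerPowers α n).det = 1 := by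
  rw [det_of_isLowerTriangular]
  · simp [lowerPowers]
  · intro i j hij
    exact if_neg (not_le.2 hij)

theorem sum_lowerPowers_apply (α : R) {n : ℕ} (j : Fin n) :
    ∑ i, lowerPowers α n j i = ∑ i ∈ range (j + 1), α ^ i :=
  sum_ite_le_pow α j.isLt

theorem lowerPowers_mul_transpose_apply_of_le (α : R) {n : ℕ} {j k : Fin n} (hjk : j ≤ k) :
    (lowerPowers α n * (lowerPowers α n)ᵀ) j k
      = α ^ ((k : ℕ) - j) * ∑ i ∈ range (j + 1), (α ^ 2) ^ i := by
  rw [mul_apply, ← sum_ite_le_pow (α ^ 2) j.isLt, mul_sum]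
  refine sum_congr rfl fun i _ => ?_
  simp only [lowerPowers, transpose_apply, of_apply, Fin.le_def]
  split_ifs with hij hik
  · rw [← pow_mul, ← pow_add, ← pow_add]
    congr 1
    omega
  · omega
  all_goals simp

theorem lowerPowers_mul_transpose_apply {𝕜 : Type*} [Field 𝕜] {α : 𝕜} (hα : α ^ 2 ≠ 1) {n : ℕ}
    (j k : Fin n) :
    (lowerPowers α n * (lowerPowers α n)ᵀ) j k
      = (α ^ ((k : ℤ) - j).natAbs - α ^ ((j : ℕ) + k + 2)) / (1 - α ^ 2) := by
  wlog hjk : j ≤ k generalizing j k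
  · have hsymm : (lowerPowers α n * (lowerPowers α n)ᵀ)ᵀ
        = lowerPowers α n * (lowerPowers α n)ᵀ := by
      rw [transpose_mul, transpose_transpose]
    rw [← hsymm, transpose_apply, this k j (le_of_not_ge hjk),
      show ((j : ℤ) - k).natAbs = ((k : ℤ) - j).natAbs by omega, add_comm (k : ℕ)]
  have hpow : α ^ ((j : ℕ) + k + 2) = α ^ ((k : ℕ) - j) * (α ^ 2) ^ ((j : ℕ) + 1) := by
    rw [← pow_mul, ← pow_add]
    congr 1
    omega
  have h1 : α ^ 2 - 1 ≠ 0 := sub_ne_zero.2 hα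
  have h2 : 1 - α ^ 2 ≠ 0 := sub_ne_zero.2 hα.symm
  rw [lowerPowers_mul_transpose_apply_of_le α hjk, geom_sum_eq hα, hpow,
    show ((k : ℤ) - j).natAbs = (k : ℕ) - j by omega]
  field_simp
  ring

noncomputable def centering (𝕜 : Type*) [Field 𝕜] (n : ℕ) : Matrix (Fin n) (Fin n) 𝕜 :=
  1 - (n : 𝕜)⁻¹ • of fun _ _ => 1

noncomputable def kernelMatrix (α : ℝ) (n : ℕ) : Matrix (Fin n) (Fin n) ℝ :=
  Matrix.of fun j k : Fin n =>
    (1 / (n : ℝ)) * (α ^ ((((k : ℕ) + 1 : ℤ)) - (((j : ℕ) + 1 : ℤ))).natAbs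
        - α ^ (((k : ℕ) + 1) + ((j : ℕ) + 1))) / (1 - α ^ 2)
      - (1 / (n : ℝ) ^ 2) * ((1 - α ^ ((k : ℕ) + 1)) * (1 - α ^ ((j : ℕ) + 1)))
        / (1 - α) ^ 2

theorem kernelMatrix_eq {α : ℝ} (hα1 : α ≠ 1) (hα2 : α ^ 2 ≠ 1) (n : ℕ) :
    kernelMatrix α n = lowerPowers α n * ((n : ℝ)⁻¹ • centering ℝ n) * (lowerPowers α n)ᵀ := by
  ext j k
  rw [Matrix.mul_smul, Matrix.smul_mul, centering, mul_sub, sub_mul, mul_one, Matrix.mul_smul,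
    Matrix.smul_mul, Matrix.smul_apply, Matrix.sub_apply, Matrix.smul_apply,
    mul_ones_mul_transpose_apply, lowerPowers_mul_transpose_apply hα2, sum_lowerPowers_apply,
    sum_lowerPowers_apply, geom_sum_eq hα1, geom_sum_eq hα1,
    show ((k : ℤ) - j).natAbs = (((k : ℕ) + 1 : ℤ) - ((j : ℕ) + 1 : ℤ)).natAbs by omega,
    show (j : ℕ) + k + 2 = ((k : ℕ) + 1) + ((j : ℕ) + 1) by omega]
  have h1 : α - 1 ≠ 0 := sub_ne_zero.2 hα1
  have h2 : 1 - α ≠ 0 := sub_ne_zero.2 hα1.symm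
  have h3 : 1 - α ^ 2 ≠ 0 := sub_ne_zero.2 hα2.symm
  have hn : (n : ℝ) ≠ 0 := Nat.cast_ne_zero.2 (Fin.pos j).ne'
  simp only [kernelMatrix, of_apply, smul_eq_mul]
  field_simp
  ring

variable {𝕜 : Type*} [Field 𝕜]

def centeringBasis (𝕜 : Type*) [Field 𝕜] (m : ℕ) : Matrix (Fin (m + 1)) (Fin (m + 1)) 𝕜 :=
  of fun i j => if j = 0 then 1 else if i = j then 1 else if i = 0 then -1 else 0

noncomputable def centeringBasisInv (𝕜 : Type*) [Field 𝕜] (m : ℕ) :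
    Matrix (Fin (m + 1)) (Fin (m + 1)) 𝕜 :=
  of fun i j =>
    if i = 0 then ((m + 1 : ℕ) : 𝕜)⁻¹ else (if i = j then 1 else 0) - ((m + 1 : ℕ) : 𝕜)⁻¹

theorem sum_centeringBasis_apply {m : ℕ} (k : Fin (m + 1)) :
    ∑ l, centeringBasis 𝕜 m l k = if k = 0 then ((m + 1 : ℕ) : 𝕜) else 0 := by
  split_ifs with hk
  · simp [centeringBasis, hk]
  · have hcol : ∀ l, centeringBasis 𝕜 m l k
        = (if l = k then 1 else 0) - if l = 0 then 1 else 0 := by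
      intro l
      simp only [centeringBasis, of_apply, if_neg hk]
      split_ifs <;> simp_all
    simp [hcol, sum_sub_distrib]

theorem centeringBasisInv_mul_centeringBasis [CharZero 𝕜] (m : ℕ) :
    centeringBasisInv 𝕜 m * centeringBasis 𝕜 m = 1 := by
  have hN : (m : 𝕜) + 1 ≠ 0 := Nat.cast_add_one_ne_zero m
  ext i k
  rw [mul_apply]
  by_cases hi : i = 0
  · simp only [centeringBasisInv, of_apply, if_pos hi, ← mul_sum, sum_centeringBasis_apply]
    subst hi
    split_ifs with hk <;> simp [hk, hN, one_apply, eq_comm]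
  · simp only [centeringBasisInv, of_apply, if_neg hi, sub_mul, sum_sub_distrib, ite_mul,
      one_mul, zero_mul, sum_ite_eq, mem_univ, if_true, ← mul_sum, sum_centeringBasis_apply]
    split_ifs with hk <;> simp [centeringBasis, hk, hN, hi, one_apply]

theorem centering_mul_centeringBasis [CharZero 𝕜] (m : ℕ) :
    centering 𝕜 (m + 1) * centeringBasis 𝕜 m
      = centeringBasis 𝕜 m * diagonal fun i => if i = 0 then 0 else 1 := by
  have hN : (m : 𝕜) + 1 ≠ 0 := Nat.cast_add_one_ne_zero m
  ext i k
  simp only [centering, sub_mul, one_mul, Matrix.smul_mul, Matrix.sub_apply, Matrix.smul_apply,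
    mul_diagonal]
  rw [mul_apply]
  simp only [of_apply, one_mul, sum_centeringBasis_apply, smul_eq_mul]
  split_ifs with hk <;> simp [centeringBasis, hk, hN]

theorem centeringBasisInv_mul_mul_centeringBasis_apply_zero_zero {m : ℕ}
    (A : Matrix (Fin (m + 1)) (Fin (m + 1)) 𝕜) :
    (centeringBasisInv 𝕜 m * A * centeringBasis 𝕜 m) 0 0
      = ((m + 1 : ℕ) : 𝕜)⁻¹ * ∑ i, ∑ j, A i j := by
  simp only [mul_apply, centeringBasis, centeringBasisInv, of_apply, if_true, mul_one, mul_sum]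
  exact sum_comm

theorem charpoly_smul_centering_coeff_one [CharZero 𝕜] {m : ℕ}
    {M N : Matrix (Fin (m + 1)) (Fin (m + 1)) 𝕜} (hMN : M * N = 1) (hM : M.det = 1) (c : 𝕜) :
    (M * (c • centering 𝕜 (m + 1)) * Mᵀ).charpoly.coeff 1
      = (-c) ^ m * (((m + 1 : ℕ) : 𝕜)⁻¹ * ∑ i, ∑ j, (N * Nᵀ) i j) := by
  have hdiag : centeringBasisInv 𝕜 m * (c • centering 𝕜 (m + 1)) * centeringBasis 𝕜 m
      = diagonal fun i => if i = 0 then 0 else c := by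
    rw [Matrix.mul_smul, Matrix.smul_mul, Matrix.mul_assoc, centering_mul_centeringBasis,
      ← Matrix.mul_assoc, centeringBasisInv_mul_centeringBasis, Matrix.one_mul, ← diagonal_smul]
    congr 1
    ext i
    by_cases hi : i = 0 <;> simp [hi]
  rw [charpoly_mul_mul_transpose hMN hM,
    det_X_smul_sub_conj (centeringBasisInv_mul_centeringBasis m), hdiag,
    coeff_one_det_X_smul_sub_of_row_eq_zero _ _ 0 (by ext j; simp [diagonal_apply]),
    diagonal_neg, det_updateRow_zero_diagonal,
    centeringBasisInv_mul_mul_centeringBasis_apply_zero_zero]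
  simp [Fin.succ_ne_zero, mul_comm]

end CenteredAR

open CenteredAR in
theorem stmt10_general (α : ℝ) (hα : |α| < 1) (n : ℕ) (hn : 2 ≤ n)
    (lam : Fin (n - 1) → ℝ)
    (hfact : ∀ t : ℝ,
      Matrix.det ((1 : Matrix (Fin n) (Fin n) ℝ) - t • Matrix.of (fun j k : Fin n =>
          (1 / (n : ℝ)) * (α ^ ((((k : ℕ) + 1 : ℤ)) - (((j : ℕ) + 1 : ℤ))).natAbs
              - α ^ (((k : ℕ) + 1) + ((j : ℕ) + 1))) / (1 - α ^ 2)
            - (1 / (n : ℝ) ^ 2) * ((1 - α ^ ((k : ℕ) + 1)) * (1 - α ^ ((j : ℕ) + 1)))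
              / (1 - α) ^ 2))
        = ∏ k : Fin (n - 1), (1 - lam k * t)) :
    ∏ k : Fin (n - 1), lam k
      = (n : ℝ) ^ (-((n : ℤ) - 1))
        * (1 + α ^ 2 * ((n : ℝ) - 1) / n - 2 * α * ((n : ℝ) - 1) / n) := by
  obtain ⟨m, rfl⟩ : ∃ m, n = m + 1 := ⟨n - 1, by omega⟩
  have hα1 : α ≠ 1 := by rintro rfl; norm_num at hα
  have hα2 : α ^ 2 ≠ 1 := by
    rw [← sq_abs]
    exact (pow_lt_one₀ (abs_nonneg α) hα two_ne_zero).ne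
  have hcoeff :=
    charpoly_coeff_one_of_det_one_sub_smul_eq_prod (kernelMatrix α (m + 1)) lam (by simp) hfact
  rw [kernelMatrix_eq hα1 hα2,
    charpoly_smul_centering_coeff_one (lowerPowers_mul_firstDifference α (m + 1))
      (det_lowerPowers α (m + 1)), sum_sum_firstDifference_mul_transpose, Fintype.card_fin,
    show ((-1 : ℝ) ^ (m + 1 - 1)) = (-1) ^ m by rw [Nat.add_sub_cancel], neg_pow, mul_assoc]
    at hcoeff
  have hN : (m : ℝ) + 1 ≠ 0 := Nat.cast_add_one_ne_zero m
  rw [← mul_left_cancel₀ (pow_ne_zero m (neg_ne_zero.2 one_ne_zero)) hcoeff,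
    show -(((m + 1 : ℕ) : ℤ) - 1) = -(m : ℤ) by push_cast; ring, _root_.zpow_neg, zpow_natCast,
    inv_pow]
  push_cast
  field_simp
  ring

theorem stmt10 (α : ℝ) (hα : |α| < 1) (n : ℕ) (hn : 2 ≤ n)
    (lam : Fin (n - 1) → ℝ)
    (hpos : ∀ k, 0 < lam k)
    (hmono : ∀ j k : Fin (n - 1), j ≤ k → lam k ≤ lam j)
    (hfact : ∀ t : ℝ,
      Matrix.det ((1 : Matrix (Fin n) (Fin n) ℝ) - t • Matrix.of (fun j k : Fin n =>
          (1 / (n : ℝ)) * (α ^ ((((k : ℕ) + 1 : ℤ)) - (((j : ℕ) + 1 : ℤ))).natAbs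
              - α ^ (((k : ℕ) + 1) + ((j : ℕ) + 1))) / (1 - α ^ 2)
            - (1 / (n : ℝ) ^ 2) * ((1 - α ^ ((k : ℕ) + 1)) * (1 - α ^ ((j : ℕ) + 1)))
              / (1 - α) ^ 2))
        = ∏ k : Fin (n - 1), (1 - lam k * t)) :
    ∏ k : Fin (n - 1), lam k
      = (n : ℝ) ^ (-((n : ℤ) - 1))
        * (1 + α ^ 2 * ((n : ℝ) - 1) / n - 2 * α * ((n : ℝ) - 1) / n) :=
  stmt10_general α hα n hn lam hfact
end

section
/- Let |α| < 1, |β| < 1 be real, and let (σ_δ), (τ_δ) be square-summable real sequences. Define, for i,j ≥ 1, F(i,j) = α^{|j-i|}·(1−α^{2·min(i,j)})/(1−α²)·∑_δ σ_δ² and E(i,j) = β^{|j-i|}·(1−β^{2·min(i,j)})/(1−β²)·∑_δ τ_δ². Then |∑_{i,j=1}^{n} F(i,j)·E(i,j) − n·M| ≤ C, where M = (1+αβ)·(∑σ_δ²)(∑τ_δ²)/((1−αβ)(1−α²)(1−β²)) and C = (∑σ_δ²)(∑τ_δ²)·[(α²+β²−2α²β²)/((1−α²)²(1−β²)²) + (2|αβ|/((1−αβ)(1−α²)(1−β²)))·(α²/(1−α²)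 + β²/(1−β²) + 1/(1−|αβ|))]. -/
open Finset

lemma L1 (a : ℝ) (f : ℕ → ℝ) (n : ℕ) :
    ∑ i ∈ Icc 1 n, ∑ j ∈ Icc 1 n, a ^ ((j : ℤ) - (i : ℤ)).natAbs * f (min i j)
      = ∑ m ∈ Icc 1 n, f m * (1 + 2 * ∑ k ∈ Icc 1 (n - m), a ^ k) := by
  induction n with
  | zero => simp
  | succ n ih =>
    have h1 : (1 : ℕ) ≤ n + 1 := by omega
    rw [Finset.sum_Icc_succ_top h1, Finset.sum_Icc_succ_top h1]
    have hinner : ∀ i ∈ Icc 1 n,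
        ∑ j ∈ Icc 1 (n+1), a ^ ((j : ℤ) - (i : ℤ)).natAbs * f (min i j)
        = (∑ j ∈ Icc 1 n, a ^ ((j : ℤ) - (i : ℤ)).natAbs * f (min i j))
          + a ^ (n + 1 - i) * f i := by
      intro i hi
      rw [Finset.sum_Icc_succ_top h1]
      simp only [mem_Icc] at hi
      have h2 : ((((n:ℕ)+1 : ℕ) : ℤ) - (i : ℤ)).natAbs = n + 1 - i := by omega
      have h3 : min i (n+1) = i := by omega
      rw [h2, h3]
    rw [Finset.sum_congr rfl hinner, Finset.sum_add_distrib, ih]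
    have htop : ∀ j ∈ Icc 1 n,
        a ^ ((j : ℤ) - (((n:ℕ)+1 : ℕ) : ℤ)).natAbs * f (min (n+1) j)
        = a ^ (n + 1 - j) * f j := by
      intro j hj
      simp only [mem_Icc] at hj
      have h2 : (((j:ℕ) : ℤ) - (((n:ℕ)+1 : ℕ) : ℤ)).natAbs = n + 1 - j := by omega
      have h3 : min (n+1) j = j := by omega
      rw [h2, h3]
    rw [Finset.sum_congr rfl htop, Finset.sum_Icc_succ_top h1]
    have hrhs : ∀ m ∈ Icc 1 n,
        f m * (1 + 2 * ∑ k ∈ Icc 1 (n + 1 - m), a ^ k)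
        = f m * (1 + 2 * ∑ k ∈ Icc 1 (n - m), a ^ k) + 2 * a ^ (n + 1 - m) * f m := by
      intro m hm
      simp only [mem_Icc] at hm
      have h4 : n + 1 - m = (n - m) + 1 := by omega
      rw [h4, Finset.sum_Icc_succ_top (by omega : (1:ℕ) ≤ n - m + 1), ← h4]
      ring
    rw [Finset.sum_congr rfl hrhs, Finset.sum_add_distrib]
    have h5 : ((((n:ℕ)+1 : ℕ) : ℤ) - (((n:ℕ)+1 : ℕ) : ℤ)).natAbs = 0 := by omega
    rw [h5, pow_zero, one_mul, Nat.sub_self]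
    have h6 : ∑ m ∈ Icc 1 n, 2 * a ^ (n + 1 - m) * f m
        = ∑ m ∈ Icc 1 n, a ^ (n + 1 - m) * f m + ∑ m ∈ Icc 1 n, a ^ (n + 1 - m) * f m := by
      rw [← Finset.sum_add_distrib]
      exact Finset.sum_congr rfl fun m _ => by ring
    rw [h6]
    simp
    ring

open Finset

lemma hgeom (x : ℝ) (hx : x ≠ 1) (K : ℕ) :
    ∑ k ∈ Icc 1 K, x ^ k = (x - x ^ (K + 1)) / (1 - x) := by
  have h1 : (1 : ℝ) - x ≠ 0 := sub_ne_zero.mpr (Ne.symm hx)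
  induction K with
  | zero => simp
  | succ K ih =>
    rw [Finset.sum_Icc_succ_top (by omega : (1:ℕ) ≤ K + 1), ih]
    field_simp
    ring

lemma Lrev (x : ℝ) (n : ℕ) :
    ∑ m ∈ Icc 1 n, x ^ (n - m + 1) = ∑ k ∈ Icc 1 n, x ^ k := by
  apply Finset.sum_nbij' (i := fun m => n + 1 - m) (j := fun k => n + 1 - k)
  · intro a ha; simp only [mem_Icc] at *; omega
  · intro a ha; simp only [mem_Icc] at *; omega
  · intro a ha; simp only [mem_Icc] at *; omega
  · intro a ha; simp only [mem_Icc] at *; omega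
  · intro a ha; simp only [mem_Icc] at ha
    congr 1
    omega

set_option maxHeartbeats 1000000 in
lemma L2 (α β : ℝ) (hα : |α| < 1) (hβ : |β| < 1) (n : ℕ) :
    |(∑ m ∈ Icc 1 n, ((1 - α ^ (2*m)) * (1 - β ^ (2*m)))
          * (1 + 2 * ∑ k ∈ Icc 1 (n - m), (α*β) ^ k))
        - (n : ℝ) * ((1 + α*β) / (1 - α*β))|
    ≤ (α^2/(1-α^2) + β^2/(1-β^2))
      + 2*|α*β|/(1-α*β) * ((α^2/(1-α^2) + β^2/(1-β^2)) + 1/(1-|α*β|)) := by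
  have ha : |α*β| < 1 := by
    rw [abs_mul]
    nlinarith [abs_nonneg α, abs_nonneg β]
  have h1a : 0 < 1 - α*β := by
    have := le_abs_self (α*β); linarith
  have h1pa : 0 < 1 + α*β := by
    have := neg_abs_le (α*β); linarith
  have h1b : 0 < 1 - |α*β| := by linarith
  have hA : 0 < 1 - α^2 := by nlinarith [sq_abs α, abs_nonneg α]
  have hB : 0 < 1 - β^2 := by nlinarith [sq_abs β, abs_nonneg β]
  have hxne : α*β ≠ 1 := by intro h; rw [h] at ha; simp at ha
  have hn' : (n : ℝ) * ((1 + α*β) / (1 - α*β))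
      = ∑ _m ∈ Icc 1 n, (1 + α*β) / (1 - α*β) := by
    rw [Finset.sum_const, Nat.card_Icc, nsmul_eq_mul]
    norm_num
  rw [hn', ← Finset.sum_sub_distrib]
  have hterm : ∀ m ∈ Icc 1 n,
      |((1 - α ^ (2*m)) * (1 - β ^ (2*m)))
          * (1 + 2 * ∑ k ∈ Icc 1 (n - m), (α*β) ^ k) - (1 + α*β) / (1 - α*β)|
      ≤ ((α ^ (2*m) + β ^ (2*m)) * (1 + α*β) + 2 * |α*β| ^ (n - m + 1)) / (1 - α*β) := by
    intro m hm
    rw [hgeom (α*β) hxne (n - m)]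
    have e1 : ((1 - α ^ (2*m)) * (1 - β ^ (2*m)))
          * (1 + 2 * ((α*β - (α*β) ^ (n - m + 1)) / (1 - α*β))) - (1 + α*β) / (1 - α*β)
        = (-((α ^ (2*m) + β ^ (2*m) - α ^ (2*m) * β ^ (2*m)) * (1 + α*β))
            - 2 * ((1 - α ^ (2*m)) * (1 - β ^ (2*m))) * (α*β) ^ (n - m + 1)) / (1 - α*β) := by
      field_simp
      ring
    rw [e1, abs_div, abs_of_pos h1a]
    gcongr
    have hap1 : |(α*β) ^ (n - m + 1)| = |α*β| ^ (n - m + 1) := abs_pow _ _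
    have hapn : (0:ℝ) ≤ |α*β| ^ (n - m + 1) := by positivity
    have hα2 : (0:ℝ) ≤ α ^ (2*m) := by rw [pow_mul]; positivity
    have hβ2 : (0:ℝ) ≤ β ^ (2*m) := by rw [pow_mul]; positivity
    have hα1 : α ^ (2*m) ≤ 1 := by
      rw [pow_mul]
      exact pow_le_one₀ (sq_nonneg α) (by nlinarith [sq_abs α, abs_nonneg α])
    have hβ1 : β ^ (2*m) ≤ 1 := by
      rw [pow_mul]
      exact pow_le_one₀ (sq_nonneg β) (by nlinarith [sq_abs β, abs_nonneg β])
    have hc0 : 0 ≤ (1 - α ^ (2*m)) * (1 - β ^ (2*m)) :=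
      mul_nonneg (by linarith) (by linarith)
    have hc1 : (1 - α ^ (2*m)) * (1 - β ^ (2*m)) ≤ 1 := by nlinarith
    have f3 : 0 ≤ (α^(2*m) + β^(2*m) - α^(2*m)*β^(2*m)) * (1+α*β) := by nlinarith
    calc |(-((α ^ (2*m) + β ^ (2*m) - α ^ (2*m) * β ^ (2*m)) * (1 + α*β))
            - 2 * ((1 - α ^ (2*m)) * (1 - β ^ (2*m))) * (α*β) ^ (n - m + 1))|
        ≤ |(-((α ^ (2*m) + β ^ (2*m) - α ^ (2*m) * β ^ (2*m)) * (1 + α*β)))|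
          + |2 * ((1 - α ^ (2*m)) * (1 - β ^ (2*m))) * (α*β) ^ (n - m + 1)| := abs_sub _ _
      _ = (α ^ (2*m) + β ^ (2*m) - α ^ (2*m) * β ^ (2*m)) * (1 + α*β)
          + 2 * ((1 - α ^ (2*m)) * (1 - β ^ (2*m))) * |α*β| ^ (n - m + 1) := by
          rw [abs_neg, abs_of_nonneg f3, abs_mul, abs_mul, hap1,
            abs_of_nonneg hc0]
          norm_num
      _ ≤ (α ^ (2*m) + β ^ (2*m)) * (1 + α*β) + 2 * |α*β| ^ (n - m + 1) := by
          have g2 : ((1 - α ^ (2*m)) * (1 - β ^ (2*m))) * |α*β| ^ (n - m + 1)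
              ≤ 1 * |α*β| ^ (n - m + 1) := mul_le_mul_of_nonneg_right hc1 hapn
          nlinarith [mul_nonneg (mul_nonneg hα2 hβ2) h1pa.le]
  have step1 := Finset.abs_sum_le_sum_abs
    (fun m => ((1 - α ^ (2*m)) * (1 - β ^ (2*m)))
        * (1 + 2 * ∑ k ∈ Icc 1 (n - m), (α*β) ^ k) - (1 + α*β) / (1 - α*β)) (Icc 1 n)
  have step2 := Finset.sum_le_sum hterm
  have hSA : ∑ m ∈ Icc 1 n, α ^ (2*m) ≤ α^2/(1-α^2) := by
    have e : ∀ m ∈ Icc 1 n, α ^ (2*m) = (α^2) ^ m := fun m _ => pow_mul α 2 m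
    rw [Finset.sum_congr rfl e, hgeom (α^2) (ne_of_lt (by nlinarith)) n]
    rw [div_le_div_iff_of_pos_right hA]
    linarith [pow_nonneg (sq_nonneg α) (n+1)]
  have hSB : ∑ m ∈ Icc 1 n, β ^ (2*m) ≤ β^2/(1-β^2) := by
    have e : ∀ m ∈ Icc 1 n, β ^ (2*m) = (β^2) ^ m := fun m _ => pow_mul β 2 m
    rw [Finset.sum_congr rfl e, hgeom (β^2) (ne_of_lt (by nlinarith)) n]
    rw [div_le_div_iff_of_pos_right hB]
    linarith [pow_nonneg (sq_nonneg β) (n+1)]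
  have hSC : ∑ m ∈ Icc 1 n, |α*β| ^ (n - m + 1) ≤ |α*β| * (1/(1-|α*β|)) := by
    rw [Lrev, hgeom |α*β| (ne_of_lt ha) n, mul_one_div]
    rw [div_le_div_iff_of_pos_right h1b]
    have : (0:ℝ) ≤ |α*β| ^ (n+1) := by positivity
    linarith
  have hSA0 : 0 ≤ ∑ m ∈ Icc 1 n, α ^ (2*m) :=
    Finset.sum_nonneg fun m _ => by rw [pow_mul]; positivity
  have hSB0 : 0 ≤ ∑ m ∈ Icc 1 n, β ^ (2*m) :=
    Finset.sum_nonneg fun m _ => by rw [pow_mul]; positivity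
  have hSC0 : 0 ≤ ∑ m ∈ Icc 1 n, |α*β| ^ (n - m + 1) :=
    Finset.sum_nonneg fun m _ => by positivity
  have step3 : ∑ m ∈ Icc 1 n,
      ((α ^ (2*m) + β ^ (2*m)) * (1 + α*β) + 2 * |α*β| ^ (n - m + 1)) / (1 - α*β)
      = (((∑ m ∈ Icc 1 n, α ^ (2*m)) + ∑ m ∈ Icc 1 n, β ^ (2*m)) * (1 + α*β)
          + 2 * ∑ m ∈ Icc 1 n, |α*β| ^ (n - m + 1)) / (1 - α*β) := by
    rw [← Finset.sum_div]
    congr 1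
    rw [Finset.sum_add_distrib, ← Finset.mul_sum, ← Finset.sum_mul, Finset.sum_add_distrib]
  have hu : (0:ℝ) ≤ α^2/(1-α^2) := by positivity
  have hv : (0:ℝ) ≤ β^2/(1-β^2) := by positivity
  have hw : (0:ℝ) ≤ 1/(1-|α*β|) := by positivity
  have e3 : (α^2/(1-α^2) + β^2/(1-β^2))
      + 2*|α*β|/(1-α*β) * ((α^2/(1-α^2) + β^2/(1-β^2)) + 1/(1-|α*β|))
      = ((α^2/(1-α^2) + β^2/(1-β^2)) * (1-α*β)
          + 2*|α*β| * ((α^2/(1-α^2) + β^2/(1-β^2)) + 1/(1-|α*β|))) / (1-α*β) := by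
    field_simp
  have haa := le_abs_self (α*β)
  have hna := neg_abs_le (α*β)
  have h0a := abs_nonneg (α*β)
  calc |∑ m ∈ Icc 1 n, (((1 - α ^ (2*m)) * (1 - β ^ (2*m)))
          * (1 + 2 * ∑ k ∈ Icc 1 (n - m), (α*β) ^ k) - (1 + α*β) / (1 - α*β))|
      ≤ ∑ m ∈ Icc 1 n, |((1 - α ^ (2*m)) * (1 - β ^ (2*m)))
          * (1 + 2 * ∑ k ∈ Icc 1 (n - m), (α*β) ^ k) - (1 + α*β) / (1 - α*β)| := step1
    _ ≤ ∑ m ∈ Icc 1 n,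
        ((α ^ (2*m) + β ^ (2*m)) * (1 + α*β) + 2 * |α*β| ^ (n - m + 1)) / (1 - α*β) := step2
    _ = (((∑ m ∈ Icc 1 n, α ^ (2*m)) + ∑ m ∈ Icc 1 n, β ^ (2*m)) * (1 + α*β)
          + 2 * ∑ m ∈ Icc 1 n, |α*β| ^ (n - m + 1)) / (1 - α*β) := step3
    _ ≤ ((α^2/(1-α^2) + β^2/(1-β^2)) * (1-α*β)
          + 2*|α*β| * ((α^2/(1-α^2) + β^2/(1-β^2)) + 1/(1-|α*β|))) / (1-α*β) := by
        rw [div_le_div_iff_of_pos_right h1a]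
        nlinarith [mul_nonneg (mul_nonneg h0a hw) h0a]
    _ = _ := e3.symm

open Finset

theorem stmt18 (α β : ℝ) (hα : |α| < 1) (hβ : |β| < 1)
    (σ τ : ℕ → ℝ) (hσ : Summable fun δ => σ δ ^ 2) (hτ : Summable fun δ => τ δ ^ 2)
    (n : ℕ) (hn : 1 ≤ n) :
    |(∑ i ∈ Finset.Icc 1 n, ∑ j ∈ Finset.Icc 1 n,
        (α ^ ((j : ℤ) - (i : ℤ)).natAbs * (1 - α ^ (2 * min i j)) / (1 - α ^ 2)
            * ∑' δ, σ δ ^ 2)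
          * (β ^ ((j : ℤ) - (i : ℤ)).natAbs * (1 - β ^ (2 * min i j)) / (1 - β ^ 2)
            * ∑' δ, τ δ ^ 2))
      - (n : ℝ) * ((1 + α * β) * ((∑' δ, σ δ ^ 2) * (∑' δ, τ δ ^ 2))
          / ((1 - α * β) * (1 - α ^ 2) * (1 - β ^ 2)))|
    ≤ (∑' δ, σ δ ^ 2) * (∑' δ, τ δ ^ 2)
        * ((α ^ 2 + β ^ 2 - 2 * α ^ 2 * β ^ 2) / ((1 - α ^ 2) ^ 2 * (1 - β ^ 2) ^ 2)
          + (2 * |α * β| / ((1 - α * β) * (1 - α ^ 2) * (1 - β ^ 2)))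
            * (α ^ 2 / (1 - α ^ 2) + β ^ 2 / (1 - β ^ 2) + 1 / (1 - |α * β|))) := by
  have ha : |α*β| < 1 := by
    rw [abs_mul]; nlinarith [abs_nonneg α, abs_nonneg β]
  have h1a : 0 < 1 - α*β := by have := le_abs_self (α*β); linarith
  have h1b : 0 < 1 - |α*β| := by linarith
  have hA : 0 < 1 - α^2 := by nlinarith [sq_abs α, abs_nonneg α]
  have hB : 0 < 1 - β^2 := by nlinarith [sq_abs β, abs_nonneg β]
  set S := ∑' δ, σ δ ^ 2 with hSdef
  set T := ∑' δ, τ δ ^ 2 with hTdef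
  have hS : 0 ≤ S := tsum_nonneg fun δ => sq_nonneg _
  have hT : 0 ≤ T := tsum_nonneg fun δ => sq_nonneg _
  have hC : 0 ≤ S * T / ((1-α^2)*(1-β^2)) := by positivity
  have hsum : (∑ i ∈ Finset.Icc 1 n, ∑ j ∈ Finset.Icc 1 n,
        (α ^ ((j : ℤ) - (i : ℤ)).natAbs * (1 - α ^ (2 * min i j)) / (1 - α ^ 2) * S)
          * (β ^ ((j : ℤ) - (i : ℤ)).natAbs * (1 - β ^ (2 * min i j)) / (1 - β ^ 2) * T))
      = S * T / ((1-α^2)*(1-β^2))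
        * ∑ i ∈ Finset.Icc 1 n, ∑ j ∈ Finset.Icc 1 n,
            (α*β) ^ ((j : ℤ) - (i : ℤ)).natAbs
              * ((1 - α ^ (2 * min i j)) * (1 - β ^ (2 * min i j))) := by
    rw [Finset.mul_sum]
    refine Finset.sum_congr rfl fun i _ => ?_
    rw [Finset.mul_sum]
    refine Finset.sum_congr rfl fun j _ => ?_
    rw [mul_pow]
    field_simp
  rw [hsum, L1 (α*β) (fun m => (1 - α ^ (2*m)) * (1 - β ^ (2*m))) n]
  have e4 : (n : ℝ) * ((1 + α * β) * (S * T) / ((1 - α * β) * (1 - α ^ 2) * (1 - β ^ 2)))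
      = S * T / ((1-α^2)*(1-β^2)) * ((n : ℝ) * ((1 + α*β) / (1 - α*β))) := by
    field_simp
  rw [e4, ← mul_sub, abs_mul, abs_of_nonneg hC]
  have e5 : S * T
        * ((α ^ 2 + β ^ 2 - 2 * α ^ 2 * β ^ 2) / ((1 - α ^ 2) ^ 2 * (1 - β ^ 2) ^ 2)
          + (2 * |α * β| / ((1 - α * β) * (1 - α ^ 2) * (1 - β ^ 2)))
            * (α ^ 2 / (1 - α ^ 2) + β ^ 2 / (1 - β ^ 2) + 1 / (1 - |α * β|)))
      = S * T / ((1-α^2)*(1-β^2))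
        * ((α^2/(1-α^2) + β^2/(1-β^2))
          + 2*|α*β|/(1-α*β) * ((α^2/(1-α^2) + β^2/(1-β^2)) + 1/(1-|α*β|))) := by
    field_simp
    ring
  rw [e5]
  exact mul_le_mul_of_nonneg_left (L2 α β hα hβ n) hC
end
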